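/- arXiv:1806.04679 — 5 statements merged into one kernel-verified Lean document; each statement's English description precedes it below -/
import Mathlib

section
/- Duality of multiple zeta values: for every admissible index k, the multiple zeta value of k equals the multiple zeta value of its dual index, i.e. ζ(k) = ζ(k†). -/
open scoped ENNReal

noncomputable section

/-- Strictly increasing `r`-tuples of positive integers
`0 = m₀ < m₁ < ⋯ < m_r`. -/
def StrictTup (r : ℕ) : Type := {m : Fin r → ℕ // StrictMono m ∧ ∀ i, 0 < m i}

/-- The `q`-integer `[m]_q = (1 - q^m)/(1 - q)`. -/
def qint (q : ℝ) (m : ℕ) : ℝ := (1 - q ^ m) / (1 - q)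

/-- `f_q(m; x) = ∏_{h=1}^m ([h]_q - q^h x)` (empty product = 1). -/
def fq (q x : ℝ) (m : ℕ) : ℝ := ∏ h ∈ Finset.Icc 1 m, (qint q h - q ^ h * x)

/-- The last entry of a tuple, or `0` for the empty tuple (i.e. `m_r`, with `m_0 = 0`). -/
def lastOr0 {r : ℕ} (m : Fin r → ℕ) : ℕ :=
  if h : 0 < r then m ⟨r - 1, by omega⟩ else 0

/-- The multiple zeta value `ζ(k) = ∑_{0<m₁<⋯<m_r} ∏ 1/m_i^{k_i}`, as a value in `[0,∞]`. -/
def mzeta (k : List ℕ) : ℝ≥0∞ :=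
  ∑' m : StrictTup k.length, ∏ i, 1 / (m.1 i : ℝ≥0∞) ^ k.get i

/-- The `q`-multiple zeta value
`ζ_q(k) = ∑_{0<m₁<⋯<m_r} ∏ q^{(k_i-1)m_i}/[m_i]_q^{k_i}`, as a value in `[0,∞]`. -/
def qmzeta (q : ℝ) (k : List ℕ) : ℝ≥0∞ :=
  ∑' m : StrictTup k.length,
    ENNReal.ofReal (∏ i, q ^ ((k.get i - 1) * m.1 i) / qint q (m.1 i) ^ k.get i)

/-- The summand `∏_i q^{(k_i-1)m_i} / (([m_i]_q - q^{m_i}x) [m_i]_q^{k_i-1})`. -/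
def ZqTerm (q x : ℝ) (k : List ℕ) (m : Fin k.length → ℕ) : ℝ :=
  ∏ i, q ^ ((k.get i - 1) * m i) /
    ((qint q (m i) - q ^ (m i) * x) * qint q (m i) ^ (k.get i - 1))

/-- The connected sum `Z_q(k; l; x)`, as a value in `[0,∞]`. -/
def connSum (q x : ℝ) (k l : List ℕ) : ℝ≥0∞ :=
  ∑' p : StrictTup k.length × StrictTup l.length,
    ENNReal.ofReal (ZqTerm q x k p.1.1 * ZqTerm q x l p.2.1 *
      (q ^ (lastOr0 p.1.1 * lastOr0 p.2.1) * fq q x (lastOr0 p.1.1) *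
        fq q x (lastOr0 p.2.1) / fq q x (lastOr0 p.1.1 + lastOr0 p.2.1)))

/-- The one-variable generating series
`Z_q(k; x) = ∑_{0<m₁<⋯<m_r} ∏ q^{(k_i-1)m_i}/(([m_i]_q - q^{m_i}x)[m_i]_q^{k_i-1})`,
as a value in `[0,∞]`. -/
def Zq1 (q x : ℝ) (k : List ℕ) : ℝ≥0∞ :=
  ∑' m : StrictTup k.length, ENNReal.ofReal (ZqTerm q x k m.1)

/-- The classical connected sum `Z(k; l)`, as a value in `[0,∞]`. -/
def connSumC (k l : List ℕ) : ℝ≥0∞ :=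
  ∑' p : StrictTup k.length × StrictTup l.length,
    (∏ i, 1 / (p.1.1 i : ℝ≥0∞) ^ k.get i) * (∏ j, 1 / (p.2.1 j : ℝ≥0∞) ^ l.get j) *
      ((Nat.factorial (lastOr0 p.1.1) : ℝ≥0∞) * (Nat.factorial (lastOr0 p.2.1)) /
        (Nat.factorial (lastOr0 p.1.1 + lastOr0 p.2.1)))

/-- The admissible index `({1}^{a₁-1}, b₁+1, …, {1}^{a_s-1}, b_s+1)` built from the
list of pairs `ab = [(a₁,b₁),…,(a_s,b_s)]`. -/
def indexFromAB (ab : List (ℕ × ℕ)) : List ℕ :=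
  ab.flatMap fun p => List.replicate (p.1 - 1) 1 ++ [p.2 + 1]

/-- The dual index `({1}^{b_s-1}, a_s+1, …, {1}^{b₁-1}, a₁+1)` built from
`ab = [(a₁,b₁),…,(a_s,b_s)]`. -/
def dualFromAB (ab : List (ℕ × ℕ)) : List ℕ :=
  ab.reverse.flatMap fun p => List.replicate (p.2 - 1) 1 ++ [p.1 + 1]

/-- real version of the factorial factor -/
def FrR (m n : ℕ) : ℝ := (Nat.factorial m) * (Nat.factorial n) / (Nat.factorial (m + n))

lemma FrR_nonneg (m n : ℕ) : 0 ≤ FrR m n := by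
  unfold FrR; positivity

lemma FrR_step (m N : ℕ) (hm : 1 ≤ m) :
    (1 / ((N:ℝ) + 1)) * FrR m (N + 1) = (1 / m) * FrR m N - (1 / m) * FrR m (N + 1) := by
  unfold FrR
  have h1 : (Nat.factorial (m + (N + 1)) : ℝ) = (Nat.factorial (m + N)) * (m + N + 1) := by
    rw [show m + (N + 1) = (m + N) + 1 by ring, Nat.factorial_succ]; push_cast; ring
  have h2 : (Nat.factorial (N + 1) : ℝ) = (Nat.factorial N) * (N + 1) := by
    rw [Nat.factorial_succ]; push_cast; ring
  have p1 : (Nat.factorial (m + N) : ℝ) ≠ 0 := by positivity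
  have p2 : ((N:ℝ) + 1) ≠ 0 := by positivity
  have p3 : ((m:ℝ)) ≠ 0 := by
    have : (1:ℝ) ≤ m := by exact_mod_cast hm
    linarith
  have p4 : ((m:ℝ) + N + 1) ≠ 0 := by positivity
  rw [h1, h2]
  field_simp
  ring

lemma FrR_le (m N : ℕ) (hm : 1 ≤ m) : FrR m N ≤ (Nat.factorial m) / ((N:ℝ) + 1) := by
  unfold FrR
  have h1 : ((Nat.factorial (N+1)) : ℝ) ≤ (Nat.factorial (m + N)) :=
    Nat.cast_le.2 (Nat.factorial_le (by omega))
  have h2 : (Nat.factorial (N + 1) : ℝ) = (Nat.factorial N) * (N + 1) := by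
    rw [Nat.factorial_succ]; push_cast; ring
  rw [div_le_div_iff₀ (by positivity) (by positivity)]
  calc (Nat.factorial m : ℝ) * (Nat.factorial N) * ((N:ℝ)+1)
      = (Nat.factorial m) * ((Nat.factorial N) * ((N:ℝ)+1)) := by ring
    _ = (Nat.factorial m) * (Nat.factorial (N+1)) := by rw [h2]
    _ ≤ (Nat.factorial m) * (Nat.factorial (m+N)) := by
        apply mul_le_mul_of_nonneg_left h1 (by positivity)
  
/-- The key telescoping identity, real version. -/
lemma star_real (M n : ℕ) (hM : 1 ≤ M) :
    HasSum (fun j : ℕ => (1 / ((n:ℝ) + 1 + j)) * FrR M (n + 1 + j))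
      ((1 / M) * FrR M n) := by
  set a : ℕ → ℝ := fun j => (1 / M) * FrR M (n + j) with ha
  have hterm : ∀ j : ℕ, (1 / ((n:ℝ) + 1 + j)) * FrR M (n + 1 + j) = a j - a (j + 1) := by
    intro j
    have := FrR_step M (n + j) hM
    simp only [ha]
    rw [show n + 1 + j = (n + j) + 1 by ring, show n + (j+1) = (n+j)+1 by ring]
    rw [show (n:ℝ) + 1 + j = ((n+j : ℕ) : ℝ) + 1 by push_cast; ring]
    exact this
  have htend : Filter.Tendsto a Filter.atTop (nhds 0) := by
    apply squeeze_zero (f := a)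
      (fun j => mul_nonneg (by positivity) (FrR_nonneg _ _))
      (g := fun j => (1 / M) * ((Nat.factorial M) / ((n:ℝ) + j + 1)))
    · intro j
      show (1 / (M:ℝ)) * FrR M (n + j) ≤ _
      apply mul_le_mul_of_nonneg_left _ (by positivity)
      have := FrR_le M (n + j) hM
      calc FrR M (n + j) ≤ (Nat.factorial M) / (((n + j : ℕ) : ℝ) + 1) := this
        _ = (Nat.factorial M) / ((n:ℝ) + j + 1) := by push_cast; ring_nf
    · rw [show (0:ℝ) = (1/M) * 0 by ring]
      apply Filter.Tendsto.const_mul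
      have h0 : Filter.Tendsto (fun j : ℕ => ((Nat.factorial M : ℝ)) / (j : ℝ))
          Filter.atTop (nhds 0) := tendsto_const_div_atTop_nhds_zero_nat _
      have h1 : Filter.Tendsto (fun j : ℕ => (((j + (n+1)) : ℕ) : ℝ)⁻¹ * (Nat.factorial M : ℝ))
          Filter.atTop (nhds 0) := by
        rw [show (0:ℝ) = 0 * (Nat.factorial M : ℝ) by ring]
        apply Filter.Tendsto.mul_const
        exact tendsto_inv_atTop_nhds_zero_nat.comp (Filter.tendsto_add_atTop_nat (n+1))
      convert h1 using 2 with j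
      push_cast
      field_simp
      ring
  have hnn : ∀ j : ℕ, 0 ≤ (1 / ((n:ℝ) + 1 + j)) * FrR M (n + 1 + j) := fun j =>
    mul_nonneg (by positivity) (FrR_nonneg _ _)
  rw [hasSum_iff_tendsto_nat_of_nonneg hnn]
  have : ∀ J, ∑ j ∈ Finset.range J, (1 / ((n:ℝ) + 1 + j)) * FrR M (n + 1 + j) = a 0 - a J := by
    intro J
    rw [Finset.sum_congr rfl (fun j _ => hterm j), Finset.sum_range_sub' a J]
  simp only [this]
  have : (1 / (M:ℝ)) * FrR M n = a 0 - 0 := by simp [ha]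
  rw [this]
  exact Filter.Tendsto.sub tendsto_const_nhds htend


/-- factorial factor in ℝ≥0∞ -/
def FE (m n : ℕ) : ℝ≥0∞ :=
  (Nat.factorial m : ℝ≥0∞) * (Nat.factorial n) / (Nat.factorial (m + n))

lemma FE_eq_ofReal (m n : ℕ) : FE m n = ENNReal.ofReal (FrR m n) := by
  unfold FE FrR
  rw [ENNReal.ofReal_div_of_pos (by positivity), ENNReal.ofReal_mul (by positivity)]
  simp [ENNReal.ofReal_natCast]

lemma FE_comm (m n : ℕ) : FE m n = FE n m := by
  unfold FE; rw [Nat.add_comm n m]; ring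

lemma FE_zero_right (m : ℕ) : FE m 0 = 1 := by
  unfold FE
  simp [Nat.factorial]
  rw [ENNReal.div_self] <;> simp [Nat.factorial_ne_zero]

/-- the natural equiv -/
def shiftEquiv (n : ℕ) : ℕ ≃ {t : ℕ // n < t} where
  toFun j := ⟨n + 1 + j, by omega⟩
  invFun t := t.1 - (n + 1)
  left_inv j := by simp
  right_inv t := by
    ext
    show n + 1 + (t.1 - (n+1)) = t.1
    have := t.2; omega

lemma inv_cast_eq_ofReal {t : ℕ} (ht : 0 < t) :
    (1 / (t : ℝ≥0∞)) = ENNReal.ofReal (1 / (t : ℝ)) := by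
  rw [ENNReal.ofReal_div_of_pos (by exact_mod_cast ht)]
  simp [ENNReal.ofReal_natCast]

/-- Key lemma: `∑_{t>n} (1/t) F(M,t) = (1/M) F(M,n)` in `ℝ≥0∞`. -/
lemma star (M n : ℕ) (hM : 1 ≤ M) :
    ∑' t : {t : ℕ // n < t}, (1 / (t.1 : ℝ≥0∞)) * FE M t.1 = (1 / (M : ℝ≥0∞)) * FE M n := by
  rw [← Equiv.tsum_eq (shiftEquiv n)]
  have hterm : ∀ j : ℕ,
      (1 / ((((shiftEquiv n) j).1 : ℕ) : ℝ≥0∞)) * FE M ((shiftEquiv n) j).1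
        = ENNReal.ofReal ((1 / ((n:ℝ) + 1 + j)) * FrR M (n + 1 + j)) := by
    intro j
    have h1 : ((shiftEquiv n) j).1 = n + 1 + j := rfl
    rw [h1, ENNReal.ofReal_mul (by positivity), ← FE_eq_ofReal,
      inv_cast_eq_ofReal (by omega)]
    congr 2
    push_cast; ring
  simp only [hterm]
  rw [← ENNReal.ofReal_tsum_of_nonneg
    (fun j => mul_nonneg (by positivity) (FrR_nonneg _ _)) (star_real M n hM).summable,
    (star_real M n hM).tsum_eq, ENNReal.ofReal_mul (by positivity), ← FE_eq_ofReal,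
    inv_cast_eq_ofReal (by omega)]

lemma lastOr0_pos {r : ℕ} (h : 0 < r) (m : Fin r → ℕ) :
    lastOr0 m = m ⟨r - 1, by omega⟩ := dif_pos h

lemma lastOr0_succ {r : ℕ} (m : Fin (r+1) → ℕ) : lastOr0 m = m (Fin.last r) := by
  unfold lastOr0
  rw [dif_pos (Nat.succ_pos r)]
  rfl

lemma lastOr0_lt_of_strictTup {r : ℕ} (x : StrictTup (r+1)) :
    lastOr0 (x.1 ∘ Fin.castSucc : Fin r → ℕ) < x.1 (Fin.last r) := by
  rcases Nat.eq_zero_or_pos r with h | h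
  · subst h
    have : lastOr0 (x.1 ∘ Fin.castSucc : Fin 0 → ℕ) = 0 := dif_neg (by omega)
    rw [this]; exact x.2.2 _
  · rw [lastOr0_pos h]
    exact x.2.1 (by simp [Fin.lt_def]; omega)

/-- drop the last entry -/
def initTup {r : ℕ} (x : StrictTup (r+1)) : StrictTup r :=
  ⟨x.1 ∘ Fin.castSucc, fun i j hij => x.2.1 (by simpa using hij), fun i => x.2.2 _⟩

/-- append an entry larger than the last -/
def snocTup {r : ℕ} (m : StrictTup r) (t : {t : ℕ // lastOr0 m.1 < t}) : StrictTup (r+1) := by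
  refine ⟨Fin.snoc m.1 t.1, ?_, ?_⟩
  · rw [Fin.strictMono_iff_lt_succ]
    intro i
    rcases Nat.lt_or_ge (i.1 + 1) r with h | h
    · have h1 : (i.succ : Fin (r+1)) = Fin.castSucc ⟨i.1+1, h⟩ := by
        ext; simp
      rw [h1, Fin.snoc_castSucc, Fin.snoc_castSucc]
      exact m.2.1 (by simp [Fin.lt_def])
    · have hi : i.1 + 1 = r := by omega
      have h1 : (i.succ : Fin (r+1)) = Fin.last r := by ext; simp [hi]
      rw [h1, Fin.snoc_castSucc, Fin.snoc_last]
      have hr : 0 < r := by omega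
      have h2 : (⟨r - 1, by omega⟩ : Fin r) = i := Fin.ext (by simp; omega)
      calc m.1 i = lastOr0 m.1 := by rw [lastOr0_pos hr m.1, h2]
        _ < t.1 := t.2
  · intro i
    rcases Nat.lt_or_ge i.1 r with h | h
    · have h1 : i = Fin.castSucc ⟨i.1, h⟩ := by ext; simp
      rw [h1, Fin.snoc_castSucc]
      exact m.2.2 _
    · have h1 : i = Fin.last r := by ext; simp; omega
      rw [h1, Fin.snoc_last]
      have := t.2; omega

lemma snocTup_val {r : ℕ} (m : StrictTup r) (t : {t : ℕ // lastOr0 m.1 < t}) :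
    (snocTup m t).1 = Fin.snoc m.1 t.1 := rfl

lemma lastOr0_snocTup {r : ℕ} (m : StrictTup r) (t : {t : ℕ // lastOr0 m.1 < t}) :
    lastOr0 (snocTup m t).1 = t.1 := by
  rw [lastOr0_succ, snocTup_val, Fin.snoc_last]

/-- the splitting equivalence -/
def splitEquiv (r : ℕ) : StrictTup (r+1) ≃ Σ m : StrictTup r, {t : ℕ // lastOr0 m.1 < t} where
  toFun x := ⟨initTup x, ⟨x.1 (Fin.last r), lastOr0_lt_of_strictTup x⟩⟩
  invFun p := snocTup p.1 p.2
  left_inv x := by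
    apply Subtype.ext
    show Fin.snoc (x.1 ∘ Fin.castSucc) (x.1 (Fin.last r)) = x.1
    exact Fin.snoc_init_self x.1
  right_inv p := by
    obtain ⟨m, t⟩ := p
    have h1 : initTup (snocTup m t) = m := by
      apply Subtype.ext
      show (Fin.snoc m.1 t.1 : Fin (r+1) → ℕ) ∘ Fin.castSucc = m.1
      funext i
      simp
    refine Sigma.ext h1 ?_
    rw [(Subtype.heq_iff_coe_eq ?_)]
    · show (Fin.snoc m.1 t.1 : Fin (r+1) → ℕ) (Fin.last r) = t.1
      simp
    · intro x
      show lastOr0 (initTup (snocTup m t)).1 < x ↔ lastOr0 m.1 < x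
      rw [h1]

lemma split_tsum {r : ℕ} (f : StrictTup (r+1) → ℝ≥0∞) :
    ∑' x : StrictTup (r+1), f x
      = ∑' m : StrictTup r, ∑' t : {t : ℕ // lastOr0 m.1 < t}, f (snocTup m t) := by
  rw [← Equiv.tsum_eq (splitEquiv r).symm f, ENNReal.tsum_sigma']
  rfl

def QE {r : ℕ} (e : Fin r → ℕ) (m : Fin r → ℕ) : ℝ≥0∞ := ∏ i, 1 / (m i : ℝ≥0∞) ^ e i

def CC (r s : ℕ) (e : Fin r → ℕ) (f : Fin s → ℕ) : ℝ≥0∞ :=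
  ∑' p : StrictTup r × StrictTup s,
    QE e p.1.1 * QE f p.2.1 * FE (lastOr0 p.1.1) (lastOr0 p.2.1)

def MZ (r : ℕ) (e : Fin r → ℕ) : ℝ≥0∞ := ∑' m : StrictTup r, QE e m.1

lemma QE_snoc {r : ℕ} (e : Fin r → ℕ) (a : ℕ) (v : Fin (r+1) → ℕ) :
    QE (Fin.snoc e a) v = QE e (v ∘ Fin.castSucc) * (1 / (v (Fin.last r) : ℝ≥0∞) ^ a) := by
  unfold QE
  rw [Fin.prod_univ_castSucc]
  congr 1
  · exact Finset.prod_congr rfl fun i _ => by rw [Fin.snoc_castSucc]; rfl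
  · rw [Fin.snoc_last]

lemma QE_snoc_succ {r : ℕ} (e : Fin r → ℕ) (a : ℕ) (v : Fin (r+1) → ℕ) :
    QE (Fin.snoc e (a+1)) v = QE (Fin.snoc e a) v * (1 / (v (Fin.last r) : ℝ≥0∞)) := by
  rw [QE_snoc, QE_snoc, pow_succ]
  simp only [one_div]
  rw [ENNReal.mul_inv (Or.inr (ENNReal.natCast_ne_top _))
    (Or.inl (ENNReal.pow_ne_top (ENNReal.natCast_ne_top _))), ← mul_assoc]

lemma one_le_lastOr0 {r : ℕ} (x : StrictTup (r+1)) : 1 ≤ lastOr0 x.1 := by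
  rw [lastOr0_succ]; exact x.2.2 _

lemma moveA (r s : ℕ) (e : Fin r → ℕ) (f : Fin s → ℕ) (a : ℕ) :
    CC (r+1) s (Fin.snoc e (a+1)) f = CC (r+1) (s+1) (Fin.snoc e a) (Fin.snoc f 1) := by
  unfold CC
  rw [ENNReal.tsum_prod', ENNReal.tsum_prod']
  refine tsum_congr fun m => ?_
  rw [split_tsum (fun n => QE (Fin.snoc e a) m.1 * QE (Fin.snoc f 1) n.1
      * FE (lastOr0 m.1) (lastOr0 n.1))]
  refine tsum_congr fun n => ?_
  have hsummand : ∀ t : {t : ℕ // lastOr0 n.1 < t},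
      QE (Fin.snoc e a) m.1 * QE (Fin.snoc f 1) (snocTup n t).1
        * FE (lastOr0 m.1) (lastOr0 (snocTup n t).1)
      = (QE (Fin.snoc e a) m.1 * QE f n.1) * ((1 / (t.1 : ℝ≥0∞)) * FE (lastOr0 m.1) t.1) := by
    intro t
    rw [lastOr0_snocTup, snocTup_val, QE_snoc f 1 (Fin.snoc n.1 t.1)]
    have hcomp : (Fin.snoc n.1 t.1 : Fin (s+1) → ℕ) ∘ Fin.castSucc = n.1 :=
      funext fun i => by simp
    rw [hcomp, Fin.snoc_last, pow_one]
    ring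
  rw [tsum_congr hsummand, ENNReal.tsum_mul_left,
    star (lastOr0 m.1) (lastOr0 n.1) (one_le_lastOr0 m),
    QE_snoc_succ e a m.1, ← lastOr0_succ m.1]
  ring

lemma moveB (r s : ℕ) (e : Fin r → ℕ) (f : Fin s → ℕ) (b : ℕ) :
    CC (r+1) (s+1) (Fin.snoc e 1) (Fin.snoc f b) = CC r (s+1) e (Fin.snoc f (b+1)) := by
  unfold CC
  rw [ENNReal.tsum_prod', ENNReal.tsum_prod']
  rw [split_tsum (fun m => ∑' n : StrictTup (s+1), QE (Fin.snoc e 1) m.1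
      * QE (Fin.snoc f b) n.1 * FE (lastOr0 m.1) (lastOr0 n.1))]
  refine tsum_congr fun m => ?_
  rw [ENNReal.tsum_comm]
  refine tsum_congr fun n => ?_
  have hsummand : ∀ t : {t : ℕ // lastOr0 m.1 < t},
      QE (Fin.snoc e 1) (snocTup m t).1 * QE (Fin.snoc f b) n.1
        * FE (lastOr0 (snocTup m t).1) (lastOr0 n.1)
      = (QE e m.1 * QE (Fin.snoc f b) n.1)
        * ((1 / (t.1 : ℝ≥0∞)) * FE (lastOr0 n.1) t.1) := by
    intro t
    rw [lastOr0_snocTup, snocTup_val, QE_snoc e 1 (Fin.snoc m.1 t.1)]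
    have hcomp : (Fin.snoc m.1 t.1 : Fin (r+1) → ℕ) ∘ Fin.castSucc = m.1 :=
      funext fun i => by simp
    rw [hcomp, Fin.snoc_last, pow_one, FE_comm t.1 (lastOr0 n.1)]
    ring
  rw [tsum_congr hsummand, ENNReal.tsum_mul_left,
    star (lastOr0 n.1) (lastOr0 m.1) (one_le_lastOr0 n),
    QE_snoc_succ f b n.1, ← lastOr0_succ n.1, FE_comm (lastOr0 n.1) (lastOr0 m.1)]
  ring

lemma CC_comm (r s : ℕ) (e : Fin r → ℕ) (f : Fin s → ℕ) : CC r s e f = CC s r f e := by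
  unfold CC
  rw [← Equiv.tsum_eq (Equiv.prodComm (StrictTup s) (StrictTup r))]
  refine tsum_congr fun p => ?_
  show QE e p.2.1 * QE f p.1.1 * FE (lastOr0 p.2.1) (lastOr0 p.1.1) = _
  rw [FE_comm]
  ring

instance : Unique (StrictTup 0) where
  default := ⟨Fin.elim0, fun i => i.elim0, fun i => i.elim0⟩
  uniq x := Subtype.ext (funext fun i => i.elim0)

lemma lastOr0_zero (m : Fin 0 → ℕ) : lastOr0 m = 0 := dif_neg (by omega)

lemma tsum_strictTup_zero (g : StrictTup 0 → ℝ≥0∞) : ∑' x, g x = g default := by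
  refine tsum_eq_single default fun b' hb' => absurd (Unique.eq_default b') hb'

lemma CC_nil (r : ℕ) (e : Fin r → ℕ) (f : Fin 0 → ℕ) : CC r 0 e f = MZ r e := by
  unfold CC MZ
  rw [ENNReal.tsum_prod']
  refine tsum_congr fun m => ?_
  rw [tsum_strictTup_zero]
  have h1 : QE f (default : StrictTup 0).1 = 1 := by
    unfold QE; exact Finset.prod_of_isEmpty _
  rw [h1, lastOr0_zero, FE_zero_right, mul_one, mul_one]


lemma connSumC_eq (k l : List ℕ) : connSumC k l = CC k.length l.length k.get l.get := rfl
lemma mzeta_eq (k : List ℕ) : mzeta k = MZ k.length k.get := rfl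

lemma CC_congr {r r' s s' : ℕ} (hr : r = r') (hs : s = s')
    (e : Fin r → ℕ) (f : Fin s → ℕ) (e' : Fin r' → ℕ) (f' : Fin s' → ℕ)
    (he : ∀ i : Fin r', e' i = e (Fin.cast hr.symm i))
    (hf : ∀ j : Fin s', f' j = f (Fin.cast hs.symm j)) :
    CC r s e f = CC r' s' e' f' := by
  subst hr; subst hs
  have he' : e' = e := funext fun i => he i
  have hf' : f' = f := funext fun j => hf j
  rw [he', hf']

lemma snoc_eq_get_append (k : List ℕ) (a : ℕ) (h : k.length + 1 = (k ++ [a]).length) :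
    ∀ i : Fin (k.length + 1),
      (Fin.snoc k.get a : Fin (k.length + 1) → ℕ) i = (k ++ [a]).get (Fin.cast h i) := by
  intro i
  induction i using Fin.lastCases with
  | last =>
    rw [Fin.snoc_last]
    show a = (k ++ [a])[(k.length : ℕ)]'_
    exact (List.getElem_concat_length (l := k) (a := a) rfl _).symm
  | cast j =>
    rw [Fin.snoc_castSucc]
    show k.get j = (k ++ [a])[(j.1 : ℕ)]'_
    exact (List.getElem_append_left j.2).symm

lemma connSumC_to_CC_left (k : List ℕ) (a : ℕ) (l : List ℕ) :
    connSumC (k ++ [a]) l = CC (k.length + 1) l.length (Fin.snoc k.get a) l.get := by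
  rw [connSumC_eq]
  exact (CC_congr (show k.length + 1 = (k ++ [a]).length by simp) rfl _ _ _ _
    (fun i => by rw [snoc_eq_get_append k a (by simp) (Fin.cast _ i)]; congr 1)
    (fun j => rfl)).symm

lemma connSumC_to_CC_both (k : List ℕ) (a : ℕ) (l : List ℕ) (b : ℕ) :
    connSumC (k ++ [a]) (l ++ [b])
      = CC (k.length + 1) (l.length + 1) (Fin.snoc k.get a) (Fin.snoc l.get b) := by
  rw [connSumC_eq]
  exact (CC_congr (show k.length + 1 = (k ++ [a]).length by simp)
    (show l.length + 1 = (l ++ [b]).length by simp) _ _ _ _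
    (fun i => by rw [snoc_eq_get_append k a (by simp) (Fin.cast _ i)]; congr 1)
    (fun j => by rw [snoc_eq_get_append l b (by simp) (Fin.cast _ j)]; congr 1)).symm

lemma connSumC_to_CC_right (k : List ℕ) (l : List ℕ) (b : ℕ) :
    connSumC k (l ++ [b]) = CC k.length (l.length + 1) k.get (Fin.snoc l.get b) := by
  rw [connSumC_eq]
  exact (CC_congr rfl (show l.length + 1 = (l ++ [b]).length by simp) _ _ _ _
    (fun i => rfl)
    (fun j => by rw [snoc_eq_get_append l b (by simp) (Fin.cast _ j)]; congr 1)).symm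

lemma listMoveA (k l : List ℕ) (a : ℕ) :
    connSumC (k ++ [a + 1]) l = connSumC (k ++ [a]) (l ++ [1]) := by
  rw [connSumC_to_CC_left, connSumC_to_CC_both]
  exact moveA k.length l.length k.get l.get a

lemma listMoveB (k l : List ℕ) (b : ℕ) :
    connSumC (k ++ [1]) (l ++ [b]) = connSumC k (l ++ [b + 1]) := by
  rw [connSumC_to_CC_both, connSumC_to_CC_right]
  exact moveB k.length l.length k.get l.get b

lemma connSumC_nil_right (k : List ℕ) : connSumC k [] = mzeta k := by
  rw [connSumC_eq, mzeta_eq]; exact CC_nil _ _ _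

lemma connSumC_nil_left (l : List ℕ) : connSumC [] l = mzeta l := by
  rw [connSumC_eq, mzeta_eq, CC_comm]; exact CC_nil _ _ _

lemma iterA (b : ℕ) : ∀ (l : List ℕ) (k : List ℕ) (a : ℕ),
    connSumC (k ++ [a + b]) l = connSumC (k ++ [a]) (l ++ List.replicate b 1) := by
  induction b with
  | zero => intro l k a; simp
  | succ b ih =>
    intro l k a
    have h1 : a + (b + 1) = (a + 1) + b := by ring
    rw [h1, ih l k (a+1), listMoveA]
    congr 1
    rw [List.replicate_succ', List.append_assoc]

lemma iterB (c : ℕ) : ∀ (k l : List ℕ) (b : ℕ),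
    connSumC (k ++ List.replicate c 1) (l ++ [b]) = connSumC k (l ++ [b + c]) := by
  induction c with
  | zero => intro k l b; simp
  | succ c ih =>
    intro k l b
    rw [List.replicate_succ', ← List.append_assoc, listMoveB, ih k l (b+1),
      show b + 1 + c = b + (c + 1) by omega]

lemma blockMove (k l : List ℕ) (a b : ℕ) (ha : 1 ≤ a) (hb : 1 ≤ b) :
    connSumC (k ++ (List.replicate (a-1) 1 ++ [b+1])) l
      = connSumC k (l ++ (List.replicate (b-1) 1 ++ [a+1])) := by
  rw [← List.append_assoc, show b + 1 = 1 + b by omega, iterA b l (k ++ List.replicate (a-1) 1) 1]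
  have h1 : k ++ List.replicate (a-1) 1 ++ [1] = k ++ List.replicate a 1 := by
    rw [List.append_assoc, ← List.replicate_succ']
    congr 2
    omega
  have h2 : l ++ List.replicate b 1 = (l ++ List.replicate (b-1) 1) ++ [1] := by
    rw [List.append_assoc, ← List.replicate_succ']
    congr 2
    omega
  rw [h1, h2, iterB a k (l ++ List.replicate (b-1) 1) 1,
    show 1 + a = a + 1 by omega, List.append_assoc]

lemma mainAux (ab : List (ℕ × ℕ)) (hpos : ∀ p ∈ ab, 0 < p.1 ∧ 0 < p.2) :
    ∀ l : List ℕ, connSumC (indexFromAB ab) l = connSumC [] (l ++ dualFromAB ab) := by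
  induction ab using List.reverseRecOn with
  | nil => intro l; simp [indexFromAB, dualFromAB]
  | append_singleton ab' p ih =>
    intro l
    have hp := hpos p (by simp)
    have hab' : ∀ q ∈ ab', 0 < q.1 ∧ 0 < q.2 := fun q hq => hpos q (by simp [hq])
    have hidx : indexFromAB (ab' ++ [p])
        = indexFromAB ab' ++ (List.replicate (p.1 - 1) 1 ++ [p.2 + 1]) := by
      unfold indexFromAB
      rw [List.flatMap_append]
      simp
    have hdual : dualFromAB (ab' ++ [p])
        = (List.replicate (p.2 - 1) 1 ++ [p.1 + 1]) ++ dualFromAB ab' := by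
      unfold dualFromAB
      rw [List.reverse_append]
      simp
    rw [hidx, blockMove _ _ _ _ hp.1 hp.2, ih hab' (l ++ (List.replicate (p.2-1) 1 ++ [p.1+1])),
      hdual]
    simp [List.append_assoc]


/-- **Duality of multiple zeta values.**  Every admissible index can be written uniquely as
`k = ({1}^{a₁-1}, b₁+1, …, {1}^{a_s-1}, b_s+1)` with positive integers `aᵢ, bᵢ`; its dual is
`k† = ({1}^{b_s-1}, a_s+1, …, {1}^{b₁-1}, a₁+1)`, and `ζ(k) = ζ(k†)`. -/
theorem duality_of_multiple_zeta_values (ab : List (ℕ × ℕ)) (hab : ab ≠ [])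
    (hpos : ∀ p ∈ ab, 0 < p.1 ∧ 0 < p.2) :
    mzeta (indexFromAB ab) = mzeta (dualFromAB ab) := by
  rw [← connSumC_nil_right (indexFromAB ab), mainAux ab hpos [], List.nil_append,
    connSumC_nil_left]



end
end

section
/- Transfer theorem for connected sums, first equality (Theorem 3): let 0 < q < 1, |x| < 1, let r ≥ 0 and s > 0 be integers and k_1, ..., k_r, l_1, ..., l_s positive integers. Then the connected sums (as values in [0, +∞]) satisfy Z_q(k_1, ..., k_r, 1; l_1, ..., l_s; x) = Z_q(k_1, ..., k_r; l_1, ..., l_{s-1}, l_s + 1; x). -/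
open scoped ENNReal

noncomputable section

namespace CSAux

open Filter Topology

variable {q x : ℝ}

lemma qint_ge_one (hq0 : 0 < q) (hq1 : q < 1) {m : ℕ} (hm : 0 < m) : 1 ≤ qint q m := by
  rw [qint, le_div_iff₀ (by linarith)]
  have h : q ^ m ≤ q := by
    calc q ^ m ≤ q ^ 1 := pow_le_pow_of_le_one hq0.le hq1.le hm
    _ = q := pow_one q
  linarith

lemma qint_pos (hq0 : 0 < q) (hq1 : q < 1) {m : ℕ} (hm : 0 < m) : 0 < qint q m :=
  lt_of_lt_of_le one_pos (qint_ge_one hq0 hq1 hm)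

lemma D_ge (hq0 : 0 < q) (hq1 : q < 1) (hx : |x| < 1) {m : ℕ} (hm : 0 < m) :
    1 - q ≤ qint q m - q ^ m * x := by
  have h1 : 1 ≤ qint q m := qint_ge_one hq0 hq1 hm
  have hqm : q ^ m ≤ q := by
    calc q ^ m ≤ q ^ 1 := pow_le_pow_of_le_one hq0.le hq1.le hm
    _ = q := pow_one q
  have hqmpos : 0 < q ^ m := pow_pos hq0 m
  have h2 : q ^ m * x ≤ q := by
    nlinarith [le_abs_self x, abs_nonneg x]
  linarith

lemma D_pos (hq0 : 0 < q) (hq1 : q < 1) (hx : |x| < 1) {m : ℕ} (hm : 0 < m) :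
    0 < qint q m - q ^ m * x :=
  lt_of_lt_of_le (by linarith) (D_ge hq0 hq1 hx hm)

lemma fq_zero : fq q x 0 = 1 := by simp [fq]

lemma fq_succ (m : ℕ) :
    fq q x (m + 1) = fq q x m * (qint q (m + 1) - q ^ (m + 1) * x) := by
  rw [fq, fq, Finset.prod_Icc_succ_top (by omega)]

lemma fq_pos (hq0 : 0 < q) (hq1 : q < 1) (hx : |x| < 1) (m : ℕ) : 0 < fq q x m := by
  refine Finset.prod_pos fun h hh => ?_
  exact D_pos hq0 hq1 hx (by simp [Finset.mem_Icc] at hh; omega)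

/-- `G m n = q^{mn} f(m) f(n) / f(m+n)`. -/
def G (q x : ℝ) (m n : ℕ) : ℝ := q ^ (m * n) * fq q x m * fq q x n / fq q x (m + n)

lemma G_pos (hq0 : 0 < q) (hq1 : q < 1) (hx : |x| < 1) (m n : ℕ) : 0 < G q x m n := by
  have h1 := fq_pos (q := q) (x := x) hq0 hq1 hx m
  have h2 := fq_pos (q := q) (x := x) hq0 hq1 hx n
  have h3 := fq_pos (q := q) (x := x) hq0 hq1 hx (m + n)
  exact div_pos (mul_pos (mul_pos (pow_pos hq0 _) h1) h2) h3

lemma qint_key (hq1 : q < 1) (m n : ℕ) :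
    qint q n = (qint q (m + n + 1) - q ^ (m + n + 1) * x)
      - q ^ n * (qint q (m + 1) - q ^ (m + 1) * x) := by
  have h : (1 : ℝ) - q ≠ 0 := by intro h; linarith [sub_eq_zero.mp h]
  have hp : q ^ (m + n + 1) = q ^ n * q ^ (m + 1) := by ring
  rw [qint, qint, qint]
  field_simp
  ring

lemma G_succ (hq0 : 0 < q) (hq1 : q < 1) (hx : |x| < 1) (m n : ℕ) :
    G q x (m + 1) n = G q x m n * (q ^ n * (qint q (m + 1) - q ^ (m + 1) * x)
      / (qint q (m + n + 1) - q ^ (m + n + 1) * x)) := by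
  have h1 : m + 1 + n = (m + n) + 1 := by ring
  have hfq := fq_pos (q := q) (x := x) hq0 hq1 hx
  have hD1 : 0 < qint q (m + 1) - q ^ (m + 1) * x := D_pos hq0 hq1 hx (by omega)
  have hD2 : 0 < qint q (m + n + 1) - q ^ (m + n + 1) * x := D_pos hq0 hq1 hx (by omega)
  rw [G, G, h1, fq_succ, fq_succ]
  have hpow : q ^ ((m + 1) * n) = q ^ (m * n) * q ^ n := by rw [← pow_add]; ring_nf
  rw [hpow]
  field_simp

/-- The key telescoping identity. -/
lemma keyA (hq0 : 0 < q) (hq1 : q < 1) (hx : |x| < 1) {n : ℕ} (hn : 0 < n) (m : ℕ) :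
    1 / (qint q (m + 1) - q ^ (m + 1) * x) * G q x (m + 1) n
      = q ^ n / qint q n * (G q x m n - G q x (m + 1) n) := by
  have hD1 : 0 < qint q (m + 1) - q ^ (m + 1) * x := D_pos hq0 hq1 hx (by omega)
  have hD2 : 0 < qint q (m + n + 1) - q ^ (m + n + 1) * x := D_pos hq0 hq1 hx (by omega)
  have hnu : 0 < qint q n := qint_pos hq0 hq1 hn
  have hkey := qint_key (x := x) hq1 m n
  have h3' : qint q (m + n + 1) - q ^ (m + n + 1) * x
      - q ^ n * (qint q (m + 1) - q ^ (m + 1) * x) ≠ 0 := by rw [← hkey]; exact hnu.ne'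
  rw [G_succ hq0 hq1 hx, hkey]
  generalize qint q (m + n + 1) - q ^ (m + n + 1) * x = A at *
  generalize qint q (m + 1) - q ^ (m + 1) * x = B at *
  have h3'' : A - B * q ^ n ≠ 0 := by rw [mul_comm]; exact h3'
  field_simp

lemma G_antitone_step (hq0 : 0 < q) (hq1 : q < 1) (hx : |x| < 1) {n : ℕ} (hn : 0 < n)
    (m : ℕ) : G q x (m + 1) n ≤ G q x m n := by
  have h := keyA hq0 hq1 hx hn m
  have hD1 : 0 < qint q (m + 1) - q ^ (m + 1) * x := D_pos hq0 hq1 hx (by omega)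
  have hnu : 0 < qint q n := qint_pos hq0 hq1 hn
  have hG : 0 < G q x (m + 1) n := G_pos hq0 hq1 hx _ _
  have hpos : 0 < q ^ n / qint q n := div_pos (pow_pos hq0 n) hnu
  nlinarith [mul_pos (div_pos one_pos hD1) hG]

lemma fq_ratio (hq0 : 0 < q) (hq1 : q < 1) (hx : |x| < 1) (M n : ℕ) :
    fq q x M * (1 - q) ^ n ≤ fq q x (M + n) := by
  induction n with
  | zero => simp
  | succ n ih =>
    have hD : 1 - q ≤ qint q (M + n + 1) - q ^ (M + n + 1) * x := D_ge hq0 hq1 hx (by omega)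
    have h1 : 0 < fq q x (M + n) := fq_pos hq0 hq1 hx _
    have h2 : (0:ℝ) < 1 - q := by linarith
    have h3 : 0 < fq q x M := fq_pos hq0 hq1 hx _
    have h4 : (0:ℝ) ≤ (1 - q) ^ n := by positivity
    calc fq q x M * (1 - q) ^ (n + 1) = (fq q x M * (1 - q) ^ n) * (1 - q) := by ring
    _ ≤ fq q x (M + n) * (qint q (M + n + 1) - q ^ (M + n + 1) * x) := by
        apply mul_le_mul ih hD h2.le h1.le
    _ = fq q x (M + n + 1) := (fq_succ _).symm

lemma G_le (hq0 : 0 < q) (hq1 : q < 1) (hx : |x| < 1) {n : ℕ} (hn : 0 < n) (m : ℕ) :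
    G q x m n ≤ fq q x n / (1 - q) ^ n * q ^ m := by
  have h2 : (0:ℝ) < 1 - q := by linarith
  have hfm := fq_pos (q := q) (x := x) hq0 hq1 hx m
  have hfn := fq_pos (q := q) (x := x) hq0 hq1 hx n
  have hfmn := fq_pos (q := q) (x := x) hq0 hq1 hx (m + n)
  have hq1' : q ^ (m * n) ≤ q ^ m := pow_le_pow_of_le_one hq0.le hq1.le (Nat.le_mul_of_pos_right m hn)
  have hr := fq_ratio hq0 hq1 hx m n
  rw [G, div_le_iff₀ hfmn]
  have h4 : (0:ℝ) < (1 - q) ^ n := by positivity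
  rw [div_mul_eq_mul_div, div_mul_eq_mul_div, le_div_iff₀ h4]
  calc q ^ (m * n) * fq q x m * fq q x n * (1 - q) ^ n
      = (fq q x m * (1 - q) ^ n) * (q ^ (m * n) * fq q x n) := by ring
    _ ≤ fq q x (m + n) * (q ^ m * fq q x n) := by
        apply mul_le_mul hr _ (by positivity) hfmn.le
        exact mul_le_mul_of_nonneg_right hq1' hfn.le
    _ = fq q x n * q ^ m * fq q x (m + n) := by ring

lemma G_tendsto (hq0 : 0 < q) (hq1 : q < 1) (hx : |x| < 1) {n : ℕ} (hn : 0 < n) (m₀ : ℕ) :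
    Filter.Tendsto (fun i : ℕ => G q x (m₀ + i) n) Filter.atTop (nhds 0) := by
  have hb : Filter.Tendsto (fun i : ℕ => fq q x n / (1 - q) ^ n * q ^ m₀ * q ^ i)
      Filter.atTop (nhds 0) := by
    have := tendsto_pow_atTop_nhds_zero_of_lt_one hq0.le hq1
    simpa using this.const_mul (fq q x n / (1 - q) ^ n * q ^ m₀)
  apply squeeze_zero (fun i => (G_pos hq0 hq1 hx _ _).le) (fun i => ?_) hb
  calc G q x (m₀ + i) n ≤ fq q x n / (1 - q) ^ n * q ^ (m₀ + i) := G_le hq0 hq1 hx hn _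
    _ = fq q x n / (1 - q) ^ n * q ^ m₀ * q ^ i := by rw [pow_add]; ring

lemma hasSum_telescope {a : ℕ → ℝ} (hmono : ∀ i, a (i + 1) ≤ a i)
    (hlim : Filter.Tendsto a Filter.atTop (nhds 0)) :
    HasSum (fun i => a i - a (i + 1)) (a 0) := by
  rw [hasSum_iff_tendsto_nat_of_nonneg (fun i => by linarith [hmono i]) _]
  have : (fun n : ℕ => ∑ i ∈ Finset.range n, (a i - a (i + 1))) = fun n => a 0 - a n := by
    funext n; exact Finset.sum_range_sub' a n
  rw [this]
  simpa using tendsto_const_nhds.sub hlim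

def shiftEquiv (m₀ : ℕ) : ℕ ≃ {j : ℕ // m₀ < j} where
  toFun i := ⟨m₀ + 1 + i, by omega⟩
  invFun j := (j : ℕ) - m₀ - 1
  left_inv i := by show m₀ + 1 + i - m₀ - 1 = i; omega
  right_inv j := Subtype.ext (by show m₀ + 1 + ((j : ℕ) - m₀ - 1) = (j : ℕ); have := j.2; omega)

/-- The inner sum over the new largest index telescopes. -/
lemma inner_sum (hq0 : 0 < q) (hq1 : q < 1) (hx : |x| < 1) {n : ℕ} (hn : 0 < n)
    (m₀ : ℕ) {C : ℝ} (hC : 0 ≤ C) :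
    ∑' j : {j : ℕ // m₀ < j},
        ENNReal.ofReal (C * (1 / (qint q (j : ℕ) - q ^ (j : ℕ) * x) * G q x (j : ℕ) n))
      = ENNReal.ofReal (C * (q ^ n / qint q n * G q x m₀ n)) := by
  rw [← Equiv.tsum_eq (shiftEquiv m₀)]
  set e := shiftEquiv m₀ with he
  have hterm : ∀ i : ℕ,
      C * (1 / (qint q ((e i : ℕ)) - q ^ ((e i : ℕ)) * x) * G q x ((e i : ℕ)) n)
        = C * (q ^ n / qint q n) * (G q x (m₀ + i) n - G q x (m₀ + i + 1) n) := by
    intro i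
    have hei : ((e i : ℕ)) = (m₀ + i) + 1 := by simp [he, shiftEquiv]; omega
    rw [hei, keyA hq0 hq1 hx hn (m₀ + i)]
    ring
  have hnn : ∀ i : ℕ, 0 ≤ C * (q ^ n / qint q n) * (G q x (m₀ + i) n - G q x (m₀ + i + 1) n) := by
    intro i
    have h1 := G_antitone_step hq0 hq1 hx hn (m₀ + i)
    have h2 : (0:ℝ) ≤ q ^ n / qint q n := (div_pos (pow_pos hq0 n) (qint_pos hq0 hq1 hn)).le
    have : G q x (m₀ + i + 1) n ≤ G q x (m₀ + i) n := by
      have : m₀ + i + 1 = (m₀ + i) + 1 := rfl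
      rw [this]; exact h1
    exact mul_nonneg (mul_nonneg hC h2) (sub_nonneg.mpr this)
  have hsum : HasSum (fun i : ℕ => C * (q ^ n / qint q n) *
      (G q x (m₀ + i) n - G q x (m₀ + i + 1) n)) (C * (q ^ n / qint q n) * G q x m₀ n) := by
    have ht := hasSum_telescope (a := fun i => G q x (m₀ + i) n)
      (fun i => G_antitone_step hq0 hq1 hx hn (m₀ + i)) (G_tendsto hq0 hq1 hx hn m₀)
    simpa [add_assoc] using ht.mul_left (C * (q ^ n / qint q n))
  calc ∑' i : ℕ, ENNReal.ofReal
        (C * (1 / (qint q ((e i : ℕ)) - q ^ ((e i : ℕ)) * x) * G q x ((e i : ℕ)) n))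
      = ∑' i : ℕ, ENNReal.ofReal (C * (q ^ n / qint q n) *
          (G q x (m₀ + i) n - G q x (m₀ + i + 1) n)) := by
        refine tsum_congr fun i => ?_; rw [hterm i]
    _ = ENNReal.ofReal (∑' i : ℕ, C * (q ^ n / qint q n) *
          (G q x (m₀ + i) n - G q x (m₀ + i + 1) n)) :=
        (ENNReal.ofReal_tsum_of_nonneg hnn hsum.summable).symm
    _ = ENNReal.ofReal (C * (q ^ n / qint q n * G q x m₀ n)) := by
        rw [hsum.tsum_eq]; congr 1; ring

end CSAux
namespace CSStruct

open CSAux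

variable {q x : ℝ}

/-- Cast between `StrictTup` types of equal length. -/
def STcast {a b : ℕ} (h : a = b) : StrictTup a ≃ StrictTup b where
  toFun m := ⟨fun i => m.1 (Fin.cast h.symm i), fun i j hij => m.2.1 hij, fun i => m.2.2 _⟩
  invFun m := ⟨fun i => m.1 (Fin.cast h i), fun i j hij => m.2.1 hij, fun i => m.2.2 _⟩
  left_inv m := rfl
  right_inv m := rfl

lemma lastOr0_cast {a b : ℕ} (h : b = a) (m : Fin a → ℕ) :
    lastOr0 (fun i : Fin b => m (Fin.cast h i)) = lastOr0 m := by subst h; rfl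

/-- Append a value at the end of a tuple. -/
def snocFun {r : ℕ} (t : Fin r → ℕ) (j : ℕ) : Fin (r + 1) → ℕ :=
  fun i => if h : (i : ℕ) < r then t ⟨i, h⟩ else j

lemma snocFun_castSucc {r : ℕ} (t : Fin r → ℕ) (j : ℕ) (i : Fin r) :
    snocFun t j i.castSucc = t i := by
  simp [snocFun, i.isLt]

lemma snocFun_last {r : ℕ} (t : Fin r → ℕ) (j : ℕ) :
    snocFun t j (Fin.last r) = j := by
  simp [snocFun]

lemma lastOr0_snocFun {r : ℕ} (t : Fin r → ℕ) (j : ℕ) :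
    lastOr0 (snocFun t j) = j := by
  rw [lastOr0, dif_pos (Nat.succ_pos r)]
  rw [show (⟨r + 1 - 1, by omega⟩ : Fin (r + 1)) = Fin.last r from Fin.ext (by simp)]
  exact snocFun_last t j

lemma entry_le_lastOr0 {r : ℕ} (t : StrictTup r) (i : Fin r) : t.1 i ≤ lastOr0 t.1 := by
  have hr : 0 < r := i.pos
  rw [lastOr0, dif_pos hr]
  refine t.2.1.monotone ?_
  have := i.isLt
  rw [Fin.le_def]
  simpa using by omega

lemma snocFun_strictMono {r : ℕ} (t : StrictTup r) {j : ℕ} (hj : lastOr0 t.1 < j) :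
    StrictMono (snocFun t.1 j) := by
  intro a b hab
  have hab' : (a : ℕ) < (b : ℕ) := hab
  unfold snocFun
  by_cases hb : (b : ℕ) < r
  · have ha : (a : ℕ) < r := by omega
    rw [dif_pos ha, dif_pos hb]
    exact t.2.1 (show (⟨a, ha⟩ : Fin r) < ⟨b, hb⟩ from hab')
  · rw [dif_neg hb]
    by_cases ha : (a : ℕ) < r
    · rw [dif_pos ha]
      exact lt_of_le_of_lt (entry_le_lastOr0 t _) hj
    · exfalso
      have := a.isLt
      have := b.isLt
      omega

lemma snocFun_pos {r : ℕ} (t : StrictTup r) {j : ℕ} (hj : lastOr0 t.1 < j)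
    (i : Fin (r + 1)) : 0 < snocFun t.1 j i := by
  unfold snocFun
  split
  · exact t.2.2 _
  · omega

/-- Splitting a strict tuple of length `r+1` into its first `r` entries and last entry. -/
def tupEquiv (r : ℕ) : StrictTup (r + 1) ≃ {p : StrictTup r × ℕ // lastOr0 p.1.1 < p.2} where
  toFun m :=
    ⟨(⟨fun i => m.1 i.castSucc,
        fun a b hab => m.2.1 (Fin.castSucc_lt_castSucc_iff.mpr hab),
        fun i => m.2.2 _⟩, m.1 (Fin.last r)), by
      by_cases hr : 0 < r
      · rw [lastOr0, dif_pos hr]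
        refine m.2.1 ?_
        rw [Fin.lt_def]
        simp only [Fin.coe_castSucc, Fin.val_last]
        omega
      · rw [lastOr0, dif_neg hr]
        exact m.2.2 _⟩
  invFun p := ⟨snocFun p.1.1.1 p.1.2, snocFun_strictMono p.1.1 p.2, snocFun_pos p.1.1 p.2⟩
  left_inv m := by
    apply Subtype.ext
    funext i
    show snocFun (fun i => m.1 i.castSucc) (m.1 (Fin.last r)) i = m.1 i
    by_cases h : (i : ℕ) < r
    · rw [show i = (Fin.castSucc ⟨(i : ℕ), h⟩) from Fin.ext (by simp)]
      rw [snocFun_castSucc]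
    · rw [show i = Fin.last r from Fin.ext (by have := i.isLt; simp; omega)]
      rw [snocFun_last]
  right_inv p := by
    apply Subtype.ext
    refine Prod.ext (Subtype.ext (funext fun i => snocFun_castSucc _ _ i)) (snocFun_last _ _)

lemma get_append_castSucc (k : List ℕ) (c : ℕ) (h : (k ++ [c]).length = k.length + 1)
    (i : Fin k.length) :
    (k ++ [c]).get (Fin.cast h.symm i.castSucc) = k.get i := by
  simp [List.get_eq_getElem, List.getElem_append_left]

lemma get_append_last (k : List ℕ) (c : ℕ) (h : (k ++ [c]).length = k.length + 1) :
    (k ++ [c]).get (Fin.cast h.symm (Fin.last k.length)) = c := by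
  simp only [List.get_eq_getElem, Fin.coe_cast, Fin.val_last]
  rw [List.getElem_append_right (by omega)]
  simp

lemma ZqTerm_append (q x : ℝ) (k : List ℕ) (c : ℕ) (h : (k ++ [c]).length = k.length + 1)
    (m : Fin (k.length + 1) → ℕ) :
    ZqTerm q x (k ++ [c]) (fun i => m (Fin.cast h i)) =
      ZqTerm q x k (fun i => m i.castSucc) *
        (q ^ ((c - 1) * m (Fin.last k.length)) /
          ((qint q (m (Fin.last k.length)) - q ^ (m (Fin.last k.length)) * x) *
            qint q (m (Fin.last k.length)) ^ (c - 1))) := by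
  rw [ZqTerm]
  rw [← Equiv.prod_comp (finCongr h.symm)
    (fun i : Fin (k ++ [c]).length =>
      q ^ (((k ++ [c]).get i - 1) * m (Fin.cast h i)) /
        ((qint q (m (Fin.cast h i)) - q ^ (m (Fin.cast h i)) * x) *
          qint q (m (Fin.cast h i)) ^ ((k ++ [c]).get i - 1)))]
  rw [Fin.prod_univ_castSucc]
  congr 1
  · rw [ZqTerm]
    refine Finset.prod_congr rfl fun i _ => ?_
    have h1 : (k ++ [c]).get (finCongr h.symm i.castSucc) = k.get i :=
      get_append_castSucc k c h i
    have h2 : Fin.cast h (finCongr h.symm i.castSucc) = i.castSucc := rfl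
    rw [h1, h2]
  · have h1 : (k ++ [c]).get (finCongr h.symm (Fin.last k.length)) = c :=
      get_append_last k c h
    have h2 : Fin.cast h (finCongr h.symm (Fin.last k.length)) = Fin.last k.length := rfl
    rw [h1, h2]

lemma ZqTerm_nonneg {q x : ℝ} (hq0 : 0 < q) (hq1 : q < 1) (hx : |x| < 1) (k : List ℕ)
    (m : Fin k.length → ℕ) (hm : ∀ i, 0 < m i) : 0 ≤ ZqTerm q x k m := by
  refine Finset.prod_nonneg fun i _ => div_nonneg (pow_nonneg hq0.le _) ?_
  exact mul_nonneg (CSAux.D_pos hq0 hq1 hx (hm i)).le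
    (pow_nonneg (CSAux.qint_pos hq0 hq1 (hm i)).le _)

lemma lastOr0_eq_last {r : ℕ} (m : Fin (r + 1) → ℕ) : lastOr0 m = m (Fin.last r) := by
  rw [lastOr0, dif_pos (Nat.succ_pos r)]
  exact congrArg m (Fin.ext (by simp))

end CSStruct
namespace CSMain

open CSAux CSStruct

variable {q x : ℝ}

lemma factor_step (hq0 : 0 < q) (hq1 : q < 1) (hx : |x| < 1) {n ls : ℕ}
    (hn : 0 < n) (hls : 0 < ls) :
    q ^ ((ls + 1 - 1) * n) / ((qint q n - q ^ n * x) * qint q n ^ (ls + 1 - 1))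
      = q ^ n / qint q n *
        (q ^ ((ls - 1) * n) / ((qint q n - q ^ n * x) * qint q n ^ (ls - 1))) := by
  obtain ⟨t, rfl⟩ : ∃ t, ls = t + 1 := ⟨ls - 1, by omega⟩
  have hD := (D_pos hq0 hq1 hx hn).ne'
  have hqn := (qint_pos hq0 hq1 hn).ne'
  simp only [Nat.add_sub_cancel]
  rw [show (t + 1) * n = t * n + n from by ring, pow_add, pow_succ]
  field_simp

lemma connSum_double (q x : ℝ) (K L : List ℕ) {s0 : ℕ} (h : L.length = s0) :
    connSum q x K L = ∑' b : StrictTup s0, ∑' a : StrictTup K.length,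
      ENNReal.ofReal (ZqTerm q x K a.1 *
        ZqTerm q x L (fun i => b.1 (Fin.cast h i)) *
        (q ^ (lastOr0 a.1 * lastOr0 (fun i : Fin L.length => b.1 (Fin.cast h i))) *
          fq q x (lastOr0 a.1) *
          fq q x (lastOr0 (fun i : Fin L.length => b.1 (Fin.cast h i))) /
          fq q x (lastOr0 a.1 + lastOr0 (fun i : Fin L.length => b.1 (Fin.cast h i))))) := by
  rw [connSum, ENNReal.tsum_prod', ENNReal.tsum_comm]
  rw [← Equiv.tsum_eq ((STcast h).symm)]
  rfl

/-- The summand of the one-sided sum, with the `l`-side contribution `C` fixed. -/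
def Fsummand (q x : ℝ) (K : List ℕ) (C : ℝ) (n : ℕ) (a : Fin K.length → ℕ) : ℝ≥0∞ :=
  ENNReal.ofReal (ZqTerm q x K a * C *
    (q ^ (lastOr0 a * n) * fq q x (lastOr0 a) * fq q x n / fq q x (lastOr0 a + n)))

lemma lhs_sum (hq0 : 0 < q) (hq1 : q < 1) (hx : |x| < 1) (k : List ℕ) {n : ℕ}
    (hn : 0 < n) {C : ℝ} (hC : 0 ≤ C) :
    ∑' a : StrictTup (k ++ [1]).length, Fsummand q x (k ++ [1]) C n a.1
      = ∑' t : StrictTup k.length, Fsummand q x k (q ^ n / qint q n * C) n t.1 := by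
  have hA : (k ++ [1]).length = k.length + 1 := by simp
  have step1 : (∑' a : StrictTup (k ++ [1]).length, Fsummand q x (k ++ [1]) C n a.1)
      = ∑' p : {p : StrictTup k.length × ℕ // lastOr0 p.1.1 < p.2},
          Fsummand q x (k ++ [1]) C n
            (fun i => snocFun (p : StrictTup k.length × ℕ).1.1 (p : StrictTup k.length × ℕ).2
              (Fin.cast hA i)) := by
    rw [← Equiv.tsum_eq ((STcast hA).symm), ← Equiv.tsum_eq ((tupEquiv k.length).symm)]
    rfl
  have step2 : (∑' p : {p : StrictTup k.length × ℕ // lastOr0 p.1.1 < p.2},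
          Fsummand q x (k ++ [1]) C n
            (fun i => snocFun (p : StrictTup k.length × ℕ).1.1 (p : StrictTup k.length × ℕ).2
              (Fin.cast hA i)))
      = ∑' t : StrictTup k.length, ∑' j : {j : ℕ // lastOr0 t.1 < j},
          Fsummand q x (k ++ [1]) C n (fun i => snocFun t.1 (j : ℕ) (Fin.cast hA i)) := by
    rw [← Equiv.tsum_eq ((Equiv.subtypeProdEquivSigmaSubtype
      (fun (t : StrictTup k.length) (j : ℕ) => lastOr0 t.1 < j)).symm)]
    rw [ENNReal.tsum_sigma']
    rfl
  rw [step1, step2]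
  refine tsum_congr fun t => ?_
  have hC' : 0 ≤ ZqTerm q x k t.1 * C :=
    mul_nonneg (ZqTerm_nonneg hq0 hq1 hx k t.1 t.2.2) hC
  have step3 : ∀ j : {j : ℕ // lastOr0 t.1 < j},
      Fsummand q x (k ++ [1]) C n (fun i => snocFun t.1 (j : ℕ) (Fin.cast hA i))
        = ENNReal.ofReal ((ZqTerm q x k t.1 * C) *
            (1 / (qint q (j : ℕ) - q ^ (j : ℕ) * x) * G q x (j : ℕ) n)) := by
    intro j
    rw [Fsummand]
    rw [ZqTerm_append q x k 1 hA (snocFun t.1 (j : ℕ))]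
    rw [lastOr0_cast hA (snocFun t.1 (j : ℕ)), lastOr0_snocFun, snocFun_last]
    rw [show (fun i => snocFun t.1 (j : ℕ) i.castSucc) = t.1 from
      funext fun i => snocFun_castSucc _ _ i]
    simp only [Nat.sub_self, Nat.zero_mul, pow_zero, mul_one]
    congr 1
    rw [G]
    ring
  rw [tsum_congr step3]
  rw [CSAux.inner_sum hq0 hq1 hx hn (lastOr0 t.1) hC']
  rw [Fsummand]
  congr 1
  rw [G]
  ring

end CSMain
/-- **Transfer theorem for connected sums, first equality.**
`Z_q(k₁,…,k_r,1; l₁,…,l_s; x) = Z_q(k₁,…,k_r; l₁,…,l_{s-1},l_s+1; x)` for `s > 0`. -/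
theorem connSum_transfer_first (q x : ℝ) (hq0 : 0 < q) (hq1 : q < 1) (hx : |x| < 1)
    (k l : List ℕ) (ls : ℕ) (hk : ∀ a ∈ k, 0 < a) (hl : ∀ a ∈ l, 0 < a) (hls : 0 < ls) :
    connSum q x (k ++ [1]) (l ++ [ls]) = connSum q x k (l ++ [ls + 1]) := by
  have hB1 : (l ++ [ls]).length = l.length + 1 := by simp
  have hB2 : (l ++ [ls + 1]).length = l.length + 1 := by simp
  rw [CSMain.connSum_double q x (k ++ [1]) (l ++ [ls]) hB1,
      CSMain.connSum_double q x k (l ++ [ls + 1]) hB2]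
  refine tsum_congr fun b => ?_
  have hn : 0 < b.1 (Fin.last l.length) := b.2.2 _
  have hlast1 : lastOr0 (fun i : Fin (l ++ [ls]).length => b.1 (Fin.cast hB1 i))
      = b.1 (Fin.last l.length) := by
    rw [CSStruct.lastOr0_cast hB1 b.1, CSStruct.lastOr0_eq_last]
  have hlast2 : lastOr0 (fun i : Fin (l ++ [ls + 1]).length => b.1 (Fin.cast hB2 i))
      = b.1 (Fin.last l.length) := by
    rw [CSStruct.lastOr0_cast hB2 b.1, CSStruct.lastOr0_eq_last]
  have hZ1 := CSStruct.ZqTerm_append q x l ls hB1 b.1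
  have hZ2 := CSStruct.ZqTerm_append q x l (ls + 1) hB2 b.1
  have hCval : 0 ≤ ZqTerm q x l (fun i => b.1 i.castSucc) *
      (q ^ ((ls - 1) * b.1 (Fin.last l.length)) /
        ((qint q (b.1 (Fin.last l.length)) - q ^ (b.1 (Fin.last l.length)) * x) *
          qint q (b.1 (Fin.last l.length)) ^ (ls - 1))) := by
    refine mul_nonneg (CSStruct.ZqTerm_nonneg hq0 hq1 hx l _ fun i => b.2.2 _) ?_
    refine div_nonneg (pow_nonneg hq0.le _) ?_
    exact mul_nonneg (CSAux.D_pos hq0 hq1 hx hn).le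
      (pow_nonneg (CSAux.qint_pos hq0 hq1 hn).le _)
  refine Eq.trans (tsum_congr fun a => ?_)
    (Eq.trans (CSMain.lhs_sum hq0 hq1 hx k hn hCval) (tsum_congr fun t => ?_))
  · rw [CSMain.Fsummand, hZ1, hlast1]
  · rw [CSMain.Fsummand, hZ2, hlast2]
    congr 1
    rw [CSMain.factor_step hq0 hq1 hx hn hls]
    ring

end
end

section
/- Convergence of the one-variable generating series: let 0 < q < 1, |x| < 1, and let k = (k_1, ..., k_r) be an admissible index. Then the series Z_q(k; x) := Σ_{0 < m_1 < ... < m_r} Π_{i=1}^{r} q^{(k_i - 1)m_i} / (([m_i]_q - q^{m_i} x)[m_i]_q^{k_i - 1}) converges (i.e. its value in [0, +∞] is finite). -/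
set_option maxHeartbeats 1000000


open scoped ENNReal

noncomputable section

def extTup {r : ℕ} (m : Fin r → ℕ) : ℕ → ℕ :=
  fun n => if h : 0 < n ∧ n ≤ r then m ⟨n - 1, by omega⟩ else 0

def gapsTup {r : ℕ} (m : Fin r → ℕ) : Fin r → ℕ :=
  fun i => extTup m (i + 1) - extTup m i - 1

lemma extTup_lt {r : ℕ} (m : StrictTup r) : ∀ n < r, extTup m.1 n < extTup m.1 (n + 1) := by
  intro n hn
  unfold extTup
  rcases Nat.eq_zero_or_pos n with h0 | h0
  · subst h0
    rw [dif_neg (by omega), dif_pos ⟨by omega, by omega⟩]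
    exact m.2.2 _
  · rw [dif_pos ⟨h0, by omega⟩, dif_pos ⟨by omega, by omega⟩]
    exact m.2.1 (Fin.mk_lt_mk.mpr (by omega))

lemma extTup_succ {r : ℕ} (m : StrictTup r) {n : ℕ} (hn : n < r) :
    extTup m.1 (n + 1) = extTup m.1 n + gapsTup m.1 ⟨n, hn⟩ + 1 := by
  have := extTup_lt m n hn
  show extTup m.1 (n + 1) = extTup m.1 n + (extTup m.1 (n + 1) - extTup m.1 n - 1) + 1
  omega

lemma extTup_apply {r : ℕ} (m : Fin r → ℕ) (i : Fin r) : extTup m ((i : ℕ) + 1) = m i := by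
  unfold extTup
  rw [dif_pos ⟨by omega, by omega⟩]
  exact congrArg m (Fin.ext (by simp))

lemma extTup_last {r : ℕ} (m : Fin r → ℕ) : extTup m r = lastOr0 m := by
  unfold extTup lastOr0
  rcases Nat.eq_zero_or_pos r with h0 | h0
  · rw [dif_neg (by omega), dif_neg (by omega)]
  · rw [dif_pos ⟨h0, le_refl r⟩, dif_pos h0]

lemma gapsTup_sum {r : ℕ} (m : StrictTup r) :
    ∑ i : Fin r, (gapsTup m.1 i + 1) = lastOr0 m.1 := by
  have h1 : ∀ i : Fin r, gapsTup m.1 i + 1 = extTup m.1 ((i : ℕ) + 1) - extTup m.1 (i : ℕ) := by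
    intro i
    have := extTup_lt m i i.2
    unfold gapsTup
    omega
  have h2 : ∀ n, n ≤ r →
      ∑ i ∈ Finset.range n, (extTup m.1 (i + 1) - extTup m.1 i) = extTup m.1 n := by
    intro n
    induction n with
    | zero => intro _; simp [extTup]
    | succ n ih =>
      intro hn
      rw [Finset.sum_range_succ, ih (by omega)]
      have := extTup_lt m n (by omega)
      omega
  calc ∑ i : Fin r, (gapsTup m.1 i + 1)
      = ∑ i : Fin r, (extTup m.1 ((i : ℕ) + 1) - extTup m.1 (i : ℕ)) :=
        Finset.sum_congr rfl fun i _ => h1 i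
    _ = ∑ i ∈ Finset.range r, (extTup m.1 (i + 1) - extTup m.1 i) :=
        Fin.sum_univ_eq_sum_range (fun n => extTup m.1 (n + 1) - extTup m.1 n) r
    _ = extTup m.1 r := h2 r le_rfl
    _ = lastOr0 m.1 := extTup_last m.1

lemma gapsTup_inj {r : ℕ} : Function.Injective (fun m : StrictTup r => gapsTup m.1) := by
  intro m m' h
  have h' : gapsTup m.1 = gapsTup m'.1 := h
  have hext : ∀ n, n ≤ r → extTup m.1 n = extTup m'.1 n := by
    intro n
    induction n with
    | zero => intro _; simp [extTup]
    | succ n ih =>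
      intro hn
      rw [extTup_succ m (by omega), extTup_succ m' (by omega), ih (by omega),
        congrFun h' ⟨n, by omega⟩]
  apply Subtype.ext
  funext i
  rw [← extTup_apply m.1 i, ← extTup_apply m'.1 i]
  exact hext _ (by omega)

lemma tsum_pi_fin (F : ℕ → ℝ≥0∞) : ∀ r : ℕ,
    (∑' g : Fin r → ℕ, ∏ i, F (g i)) = (∑' n, F n) ^ r := by
  intro r
  induction r with
  | zero =>
    rw [tsum_eq_single (fun i : Fin 0 => i.elim0)
      (fun b hb => absurd (funext fun i => i.elim0) hb)]
    simp
  | succ n ih =>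
    rw [← Equiv.tsum_eq (Fin.consEquiv fun _ : Fin (n + 1) => ℕ)
      (fun g : Fin (n+1) → ℕ => ∏ i, F (g i)), ENNReal.tsum_prod']
    have key : ∀ a : ℕ,
        (∑' g : Fin n → ℕ, ∏ i, F (((Fin.consEquiv fun _ : Fin (n + 1) => ℕ) (a, g)) i))
          = F a * (∑' m, F m) ^ n := by
      intro a
      rw [← ih, ← ENNReal.tsum_mul_left]
      refine tsum_congr fun g => ?_
      rw [Fin.prod_univ_succ]
      simp [Fin.consEquiv]
    calc (∑' (a : ℕ) (g : Fin n → ℕ),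
            ∏ i, F (((Fin.consEquiv fun _ : Fin (n + 1) => ℕ) (a, g)) i))
        = ∑' a : ℕ, F a * (∑' m, F m) ^ n := tsum_congr key
      _ = (∑' m, F m) ^ (n + 1) := by
          rw [ENNReal.tsum_mul_right, pow_succ]
          exact mul_comm _ _

/-- **Convergence of the one-variable generating series.**  For `0 < q < 1`, `|x| < 1` and
`k` an admissible index, the series `Z_q(k; x)` converges, i.e. its value in `[0,∞]`
is finite. -/
theorem Zq1_finite (q x : ℝ) (hq0 : 0 < q) (hq1 : q < 1) (hx : |x| < 1)
    (k : List ℕ) (hk : k ≠ []) (hpos : ∀ a ∈ k, 0 < a) (hadm : 2 ≤ k.getLast hk) :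
    Zq1 q x k ≠ ⊤ := by
  have hr : 0 < k.length := List.length_pos_iff.mpr hk
  have hxnn : (0:ℝ) ≤ |x| := abs_nonneg x
  have hD : (0:ℝ) < 1 - q * |x| := by nlinarith
  set D : ℝ := 1 - q * |x| with hDdef
  -- q-integer bounds
  have hqint : ∀ n : ℕ, 0 < n → 1 ≤ qint q n := by
    intro n hn
    rw [qint, le_div_iff₀ (by linarith)]
    have h1 : q ^ n ≤ q ^ 1 := pow_le_pow_of_le_one hq0.le hq1.le hn
    rw [pow_one] at h1
    nlinarith
  have hden : ∀ n : ℕ, 0 < n → D ≤ qint q n - q ^ n * x := by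
    intro n hn
    have h1 := hqint n hn
    have hq' : q ^ n ≤ q := by
      have := pow_le_pow_of_le_one hq0.le hq1.le hn
      rwa [pow_one] at this
    have h2 : q ^ n * x ≤ q * |x| := by
      have ha : q ^ n * x ≤ q ^ n * |x| :=
        mul_le_mul_of_nonneg_left (le_abs_self x) (pow_nonneg hq0.le n)
      have hb : q ^ n * |x| ≤ q * |x| := mul_le_mul_of_nonneg_right hq' hxnn
      linarith
    simp only [hDdef]
    linarith
  have hlt : k.length - 1 < k.length := by omega
  set J : Fin k.length := ⟨k.length - 1, hlt⟩ with hJ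
  have hget : 2 ≤ k.get J := by
    rw [List.get_eq_getElem]
    rwa [List.getLast_eq_getElem] at hadm
  -- per-term bound
  have hterm : ∀ m : StrictTup k.length,
      ZqTerm q x k m.1 ≤ D⁻¹ ^ k.length * q ^ (lastOr0 m.1) := by
    intro m
    have hm1 : ∀ i, 0 < m.1 i := m.2.2
    have hlast : lastOr0 m.1 = m.1 J := by
      rw [lastOr0, dif_pos hr]
    have hfac : ∀ i : Fin k.length, q ^ ((k.get i - 1) * m.1 i) /
        ((qint q (m.1 i) - q ^ (m.1 i) * x) * qint q (m.1 i) ^ (k.get i - 1))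
        ≤ D⁻¹ * (if i = J then q ^ (m.1 J) else 1) := by
      intro i
      have h1 := hqint (m.1 i) (hm1 i)
      have h2 := hden (m.1 i) (hm1 i)
      have hqp : (0:ℝ) ≤ q ^ ((k.get i - 1) * m.1 i) := pow_nonneg hq0.le _
      have hp : (1:ℝ) ≤ qint q (m.1 i) ^ (k.get i - 1) := one_le_pow₀ h1
      have hden2 : D ≤ (qint q (m.1 i) - q ^ (m.1 i) * x) * qint q (m.1 i) ^ (k.get i - 1) := by
        nlinarith
      have step1 : q ^ ((k.get i - 1) * m.1 i) /
          ((qint q (m.1 i) - q ^ (m.1 i) * x) * qint q (m.1 i) ^ (k.get i - 1))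
          ≤ q ^ ((k.get i - 1) * m.1 i) / D :=
        div_le_div_of_nonneg_left hqp hD hden2
      refine step1.trans ?_
      rw [div_eq_inv_mul]
      refine mul_le_mul_of_nonneg_left ?_ (inv_nonneg.mpr hD.le)
      by_cases hi : i = J
      · rw [if_pos hi, ← hi]
        apply pow_le_pow_of_le_one hq0.le hq1.le
        have h2k : 2 ≤ k.get i := hi ▸ hget
        exact Nat.le_mul_of_pos_left _ (by omega)
      · rw [if_neg hi]
        exact pow_le_one₀ hq0.le hq1.le
    have hnn : ∀ i ∈ Finset.univ, (0:ℝ) ≤ q ^ ((k.get i - 1) * m.1 i) /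
        ((qint q (m.1 i) - q ^ (m.1 i) * x) * qint q (m.1 i) ^ (k.get i - 1)) := by
      intro i _
      refine div_nonneg (pow_nonneg hq0.le _) ?_
      have h1 := hqint (m.1 i) (hm1 i)
      have h2 := hden (m.1 i) (hm1 i)
      have hp : (1:ℝ) ≤ qint q (m.1 i) ^ (k.get i - 1) := one_le_pow₀ h1
      nlinarith
    calc ZqTerm q x k m.1
        ≤ ∏ i : Fin k.length, D⁻¹ * (if i = J then q ^ (m.1 J) else 1) :=
          Finset.prod_le_prod hnn (fun i _ => hfac i)
      _ = D⁻¹ ^ k.length * q ^ (m.1 J) := by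
          rw [Finset.prod_mul_distrib, Finset.prod_const, Finset.prod_ite_eq']
          simp
      _ = D⁻¹ ^ k.length * q ^ (lastOr0 m.1) := by rw [hlast]
  -- finiteness of the dominating series
  set c : ℝ≥0∞ := ENNReal.ofReal q with hcdef
  have hc1 : c < 1 := by
    rw [hcdef, ← ENNReal.ofReal_one]
    exact (ENNReal.ofReal_lt_ofReal_iff_of_nonneg hq0.le).mpr hq1
  have hcne : c ≠ ⊤ := ENNReal.ofReal_ne_top
  have hS : (∑' m : StrictTup k.length, ENNReal.ofReal (q ^ (lastOr0 m.1))) ≠ ⊤ := by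
    have hkey : ∀ m : StrictTup k.length,
        ENNReal.ofReal (q ^ (lastOr0 m.1)) = ∏ i, c ^ (gapsTup m.1 i + 1) := by
      intro m
      rw [← gapsTup_sum m, ← Finset.prod_pow_eq_pow_sum,
        ENNReal.ofReal_prod_of_nonneg (fun i _ => pow_nonneg hq0.le _)]
      exact Finset.prod_congr rfl fun i _ => ENNReal.ofReal_pow hq0.le _
    have hle : (∑' m : StrictTup k.length, ENNReal.ofReal (q ^ (lastOr0 m.1)))
        ≤ ∑' g : Fin k.length → ℕ, ∏ i, c ^ (g i + 1) := by
      simp_rw [hkey]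
      exact ENNReal.tsum_comp_le_tsum_of_injective gapsTup_inj
        (fun g => ∏ i, c ^ (g i + 1))
    have hval : (∑' g : Fin k.length → ℕ, ∏ i, c ^ (g i + 1))
        = (∑' n : ℕ, c ^ (n + 1)) ^ k.length :=
      tsum_pi_fin (fun n => c ^ (n + 1)) k.length
    have hgeo : (∑' n : ℕ, c ^ (n + 1)) ≠ ⊤ := by
      have heq : (∑' n : ℕ, c ^ (n + 1)) = c * ∑' n : ℕ, c ^ n := by
        rw [← ENNReal.tsum_mul_left]
        exact tsum_congr fun n => by rw [pow_succ, mul_comm]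
      rw [heq, ENNReal.tsum_geometric]
      exact ENNReal.mul_ne_top hcne
        (ENNReal.inv_ne_top.mpr (tsub_pos_of_lt hc1).ne')
    exact ne_top_of_le_ne_top (ENNReal.pow_ne_top hgeo) (hle.trans_eq hval)
  -- conclude
  have hbound : Zq1 q x k ≤ ENNReal.ofReal (D⁻¹ ^ k.length) *
      ∑' m : StrictTup k.length, ENNReal.ofReal (q ^ (lastOr0 m.1)) := by
    rw [Zq1, ← ENNReal.tsum_mul_left]
    refine ENNReal.tsum_le_tsum fun m => ?_
    calc ENNReal.ofReal (ZqTerm q x k m.1)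
        ≤ ENNReal.ofReal (D⁻¹ ^ k.length * q ^ (lastOr0 m.1)) :=
          ENNReal.ofReal_le_ofReal (hterm m)
      _ = ENNReal.ofReal (D⁻¹ ^ k.length) * ENNReal.ofReal (q ^ (lastOr0 m.1)) :=
          ENNReal.ofReal_mul (pow_nonneg (inv_nonneg.mpr hD.le) k.length)
  exact ne_top_of_le_ne_top (ENNReal.mul_ne_top ENNReal.ofReal_ne_top hS) hbound


end
end

section
/- Duality of the generating series (Corollary): let 0 < q < 1, |x| < 1, let k be an admissible index and k† its dual. Then Z_q(k; x) = Z_q(k†; x), where Z_q(k; x) := Σ_{0 < m_1 < ... < m_r} Π_{i=1}^{r} q^{(k_i - 1)m_i} / (([m_i]_q - q^{m_i} x)[m_i]_q^{k_i - 1}). -/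
open scoped ENNReal

noncomputable section

section SY
variable {q x : ℝ}

def SYF (q x : ℝ) (m : ℕ) : ℝ := 1 / (qint q m - q ^ m * x)
def SYG (q : ℝ) (n : ℕ) : ℝ := q ^ n / qint q n
def SYwt (q x : ℝ) (c m : ℕ) : ℝ :=
  q ^ ((c - 1) * m) / ((qint q m - q ^ m * x) * qint q m ^ (c - 1))
def SYC (q x : ℝ) (m n : ℕ) : ℝ := q ^ (m * n) * fq q x m * fq q x n / fq q x (m + n)

lemma one_le_qint (hq0 : 0 < q) (hq1 : q < 1) {m : ℕ} (hm : 1 ≤ m) : 1 ≤ qint q m := by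
  rw [qint, le_div_iff₀ (by linarith)]
  have : q ^ m ≤ q ^ 1 := pow_le_pow_of_le_one hq0.le hq1.le hm
  simpa using by linarith

lemma qint_pos (hq0 : 0 < q) (hq1 : q < 1) {m : ℕ} (hm : 1 ≤ m) : 0 < qint q m :=
  lt_of_lt_of_le one_pos (one_le_qint hq0 hq1 hm)

lemma denom_pos (hq0 : 0 < q) (hq1 : q < 1) (hx : |x| < 1) {m : ℕ} (hm : 1 ≤ m) :
    0 < qint q m - q ^ m * x := by
  have h1 : 1 ≤ qint q m := one_le_qint hq0 hq1 hm
  have h2 : q ^ m * x ≤ |q ^ m * x| := le_abs_self _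
  have h3 : |q ^ m * x| = q ^ m * |x| := by
    rw [abs_mul, abs_of_pos (pow_pos hq0 m)]
  have h4 : q ^ m ≤ 1 := pow_le_one₀ hq0.le hq1.le
  nlinarith [abs_nonneg x, pow_pos hq0 m]

lemma denom_ge (hq0 : 0 < q) (hq1 : q < 1) (hx : |x| < 1) {m : ℕ} (hm : 1 ≤ m) :
    1 - |x| ≤ qint q m - q ^ m * x := by
  have h1 : 1 ≤ qint q m := one_le_qint hq0 hq1 hm
  have h2 : q ^ m * x ≤ |q ^ m * x| := le_abs_self _
  have h3 : |q ^ m * x| = q ^ m * |x| := by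
    rw [abs_mul, abs_of_pos (pow_pos hq0 m)]
  have h4 : q ^ m ≤ 1 := pow_le_one₀ hq0.le hq1.le
  nlinarith [abs_nonneg x, pow_pos hq0 m]

lemma fq_pos (hq0 : 0 < q) (hq1 : q < 1) (hx : |x| < 1) (m : ℕ) : 0 < fq q x m := by
  refine Finset.prod_pos fun h hh => ?_
  exact denom_pos hq0 hq1 hx (Finset.mem_Icc.mp hh).1

lemma fq_succ (m : ℕ) :
    fq q x (m + 1) = fq q x m * (qint q (m + 1) - q ^ (m + 1) * x) :=
  Finset.prod_Icc_succ_top (Nat.succ_le_succ (Nat.zero_le m)) _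

lemma fq_zero : fq q x 0 = 1 := by simp [fq]

lemma SYF_nonneg (hq0 : 0 < q) (hq1 : q < 1) (hx : |x| < 1) {m : ℕ} (hm : 1 ≤ m) :
    0 ≤ SYF q x m := le_of_lt (by exact div_pos one_pos (denom_pos hq0 hq1 hx hm))

lemma SYG_nonneg (hq0 : 0 < q) (hq1 : q < 1) (n : ℕ) : 0 ≤ SYG q n := by
  rcases Nat.eq_zero_or_pos n with h | h
  · simp [SYG, h, qint]
  · exact le_of_lt (div_pos (pow_pos hq0 n) (qint_pos hq0 hq1 h))

lemma SYwt_nonneg (hq0 : 0 < q) (hq1 : q < 1) (hx : |x| < 1) (c : ℕ) {m : ℕ} (hm : 1 ≤ m) :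
    0 ≤ SYwt q x c m := by
  apply div_nonneg (pow_nonneg hq0.le _)
  exact le_of_lt (mul_pos (denom_pos hq0 hq1 hx hm) (pow_pos (qint_pos hq0 hq1 hm) _))

lemma SYC_nonneg (hq0 : 0 < q) (hq1 : q < 1) (hx : |x| < 1) (m n : ℕ) : 0 ≤ SYC q x m n := by
  apply div_nonneg _ (fq_pos hq0 hq1 hx _).le
  have := fq_pos hq0 hq1 hx m
  have := fq_pos hq0 hq1 hx n
  positivity

lemma SYC_symm (m n : ℕ) : SYC q x m n = SYC q x n m := by
  rw [SYC, SYC, Nat.mul_comm, Nat.add_comm]; ring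

lemma SYC_zero_right (hq0 : 0 < q) (hq1 : q < 1) (hx : |x| < 1) (m : ℕ) :
    SYC q x m 0 = 1 := by
  rw [SYC, fq_zero]
  field_simp [(fq_pos hq0 hq1 hx m).ne']
  simp

lemma SYC_zero_left (hq0 : 0 < q) (hq1 : q < 1) (hx : |x| < 1) (n : ℕ) :
    SYC q x 0 n = 1 := by
  rw [SYC_symm]; exact SYC_zero_right hq0 hq1 hx n

lemma SYwt_one (m : ℕ) : SYwt q x 1 m = SYF q x m := by simp [SYwt, SYF]

lemma SYwt_succ {c : ℕ} (hc : 1 ≤ c) (m : ℕ) :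
    SYwt q x (c + 1) m = SYwt q x c m * SYG q m := by
  rw [SYwt, SYwt, SYG, div_mul_div_comm]
  congr 1
  · rw [← pow_add]
    congr 1
    have : c + 1 - 1 = (c - 1) + 1 := by omega
    rw [this, Nat.succ_mul]
  · have : c + 1 - 1 = (c - 1) + 1 := by omega
    rw [this, pow_succ]; ring

lemma qint_key (hq0 : 0 < q) (hq1 : q < 1) (m N : ℕ) :
    qint q (m + N + 1) - q ^ N * qint q (m + 1) = qint q N := by
  have hq : (1:ℝ) - q ≠ 0 := by linarith
  rw [qint, qint, qint]
  field_simp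
  rw [show m + N + 1 = N + (m+1) by omega, pow_add]
  ring

open Filter in
lemma SY_step (hq0 : 0 < q) (hq1 : q < 1) (hx : |x| < 1) {N : ℕ} (hN : 1 ≤ N) (m : ℕ) :
    SYF q x (m + 1) * SYC q x (m + 1) N
      = SYG q N * (SYC q x m N - SYC q x (m + 1) N) := by
  have hd1 : 0 < qint q (m + 1) - q ^ (m + 1) * x := denom_pos hq0 hq1 hx (by omega)
  have hdm : 0 < qint q (m + N + 1) - q ^ (m + N + 1) * x := denom_pos hq0 hq1 hx (by omega)
  have hfm : 0 < fq q x m := fq_pos hq0 hq1 hx m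
  have hfN : 0 < fq q x N := fq_pos hq0 hq1 hx N
  have hfmN : 0 < fq q x (m + N) := fq_pos hq0 hq1 hx (m + N)
  have hQN : 0 < qint q N := qint_pos hq0 hq1 hN
  have e1 : fq q x (m + 1) = fq q x m * (qint q (m + 1) - q ^ (m + 1) * x) := fq_succ m
  have e2 : fq q x (m + 1 + N) = fq q x (m + N) * (qint q (m + N + 1) - q ^ (m + N + 1) * x) := by
    rw [show m + 1 + N = (m + N) + 1 by omega]; exact fq_succ (m + N)
  have e3 : qint q (m + N + 1) - q ^ (m + N + 1) * x
      = qint q N + q ^ N * (qint q (m + 1) - q ^ (m + 1) * x) := by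
    have h := qint_key (q := q) hq0 hq1 m N
    have hp : q ^ (m + N + 1) = q ^ N * q ^ (m + 1) := by
      rw [← pow_add]; congr 1; omega
    rw [hp]; linear_combination h
  have hp2 : q ^ ((m + 1) * N) = q ^ (m * N) * q ^ N := by
    rw [← pow_add]; congr 1; ring
  unfold SYF SYC SYG
  rw [e1, e2, e3, hp2]
  field_simp
  ring

open Filter in
lemma SYC_tendsto (hq0 : 0 < q) (hq1 : q < 1) (hx : |x| < 1) {N : ℕ} (hN : 1 ≤ N) :
    Tendsto (fun m => SYC q x m N) atTop (nhds 0) := by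
  have h1x : (0:ℝ) < 1 - |x| := by linarith
  have hKnn : 0 ≤ fq q x N / (1 - |x|) ^ N := by
    have := fq_pos hq0 hq1 hx N; positivity
  apply squeeze_zero (fun m => SYC_nonneg hq0 hq1 hx m N)
    (g := fun m => (q ^ N) ^ m * (fq q x N / (1 - |x|) ^ N))
  · intro m
    have hfm : 0 < fq q x m := fq_pos hq0 hq1 hx m
    have hfN : 0 < fq q x N := fq_pos hq0 hq1 hx N
    have hfmN : 0 < fq q x (m + N) := fq_pos hq0 hq1 hx (m + N)
    have key : fq q x m * (1 - |x|) ^ N ≤ fq q x (m + N) := by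
      have hIcc : ∀ r : ℕ, Finset.Icc 1 r = Finset.Ioc 0 r := by
        intro r; ext h; simp [Nat.lt_iff_add_one_le]
      have hsplit : fq q x m * (∏ h ∈ Finset.Ioc m (m + N), (qint q h - q ^ h * x))
          = fq q x (m + N) := by
        rw [fq, fq, hIcc, hIcc]
        exact Finset.prod_Ioc_consecutive _ (Nat.zero_le m) (Nat.le_add_right m N)
      rw [← hsplit]
      apply mul_le_mul_of_nonneg_left _ hfm.le
      calc (1 - |x|) ^ N = ∏ _h ∈ Finset.Ioc m (m + N), (1 - |x|) := by
            rw [Finset.prod_const, Nat.card_Ioc]; congr 1; omega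
        _ ≤ _ := by
            apply Finset.prod_le_prod (fun _ _ => h1x.le)
            intro h hh
            exact denom_ge hq0 hq1 hx (by have := (Finset.mem_Ioc.mp hh).1; omega)
    rw [SYC, div_le_iff₀ hfmN]
    calc q ^ (m * N) * fq q x m * fq q x N
        = (q ^ N) ^ m * (fq q x N / (1 - |x|) ^ N) * (fq q x m * (1 - |x|) ^ N) := by
          rw [← pow_mul, show N * m = m * N from Nat.mul_comm _ _]
          field_simp
      _ ≤ (q ^ N) ^ m * (fq q x N / (1 - |x|) ^ N) * fq q x (m + N) := by
          apply mul_le_mul_of_nonneg_left key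
          positivity
  · have : Tendsto (fun m : ℕ => (q ^ N) ^ m) atTop (nhds 0) :=
      tendsto_pow_atTop_nhds_zero_of_lt_one (by positivity)
        (pow_lt_one₀ hq0.le hq1 (by omega))
    simpa using this.mul_const _

open Filter in
lemma SY_hasSum (hq0 : 0 < q) (hq1 : q < 1) (hx : |x| < 1) {N : ℕ} (hN : 1 ≤ N) (b : ℕ) :
    HasSum (fun j : ℕ => SYF q x (b + 1 + j) * SYC q x (b + 1 + j) N)
      (SYG q N * SYC q x b N) := by
  set u : ℕ → ℝ := fun j => SYC q x (b + j) N with hu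
  set f : ℕ → ℝ := fun j => SYF q x (b + 1 + j) * SYC q x (b + 1 + j) N with hf
  have hterm : ∀ j, f j = SYG q N * (u j - u (j + 1)) := by
    intro j
    have h := SY_step hq0 hq1 hx hN (b + j)
    simp only [hf, hu, show b + 1 + j = b + j + 1 by omega, show b + (j + 1) = b + j + 1 by omega]
    exact h
  have hnn : ∀ j, 0 ≤ f j := fun j =>
    mul_nonneg (SYF_nonneg hq0 hq1 hx (by omega)) (SYC_nonneg hq0 hq1 hx _ _)
  have hpartial : ∀ n, ∑ j ∈ Finset.range n, f j = SYG q N * (u 0 - u n) := by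
    intro n
    calc ∑ j ∈ Finset.range n, f j = ∑ j ∈ Finset.range n, SYG q N * (u j - u (j + 1)) :=
          Finset.sum_congr rfl fun j _ => hterm j
      _ = SYG q N * (u 0 - u n) := by rw [← Finset.mul_sum, Finset.sum_range_sub' u n]
  have hulim : Tendsto u atTop (nhds 0) := by
    have h1 : Tendsto (fun j : ℕ => b + j) atTop atTop := by
      simpa [Nat.add_comm] using tendsto_add_atTop_nat b
    exact (SYC_tendsto hq0 hq1 hx hN).comp h1
  have hu0 : u 0 = SYC q x b N := by simp [hu]
  have hlim : Tendsto (fun n => ∑ j ∈ Finset.range n, f j) atTop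
      (nhds (SYG q N * SYC q x b N)) := by
    have : Tendsto (fun n => SYG q N * (u 0 - u n)) atTop
        (nhds (SYG q N * (u 0 - 0))) := (tendsto_const_nhds.sub hulim).const_mul _
    simp only [hpartial]
    simpa [hu0] using this
  have hsummable : Summable f := by
    apply summable_of_sum_range_le hnn (c := SYG q N * u 0)
    intro n
    rw [hpartial]
    have h1 : 0 ≤ u n := SYC_nonneg hq0 hq1 hx _ _
    have h2 : 0 ≤ SYG q N := SYG_nonneg hq0 hq1 N
    nlinarith
  have h := hsummable.hasSum
  rwa [tendsto_nhds_unique h.tendsto_sum_nat hlim] at h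

set_option maxHeartbeats 1000000 in
lemma SY_key (hq0 : 0 < q) (hq1 : q < 1) (hx : |x| < 1) {N : ℕ} (hN : 1 ≤ N) (b : ℕ) :
    (∑' m : ℕ, if b < m then ENNReal.ofReal (SYF q x m * SYC q x m N) else 0)
      = ENNReal.ofReal (SYG q N * SYC q x b N) := by
  set f : ℕ → ℝ≥0∞ := fun m => if b < m then ENNReal.ofReal (SYF q x m * SYC q x m N) else 0
    with hfdef
  have hsum := SY_hasSum hq0 hq1 hx hN b
  have hinj : Function.Injective (fun j : ℕ => b + 1 + j) := fun a a' h => by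
    simpa using h
  have hsupp : Function.support f ⊆ Set.range (fun j : ℕ => b + 1 + j) := by
    intro m hm
    by_cases hbm : b < m
    · exact ⟨m - b - 1, show b + 1 + (m - b - 1) = m by omega⟩
    · exfalso; apply hm; simp [hfdef, hbm]
  have h2 : ∀ i : ℕ, f (b + 1 + i)
      = ENNReal.ofReal (SYF q x (b + 1 + i) * SYC q x (b + 1 + i) N) := by
    intro i
    have hb : b < b + 1 + i := by omega
    simp only [hfdef, if_pos hb]
  rw [← hinj.tsum_eq hsupp]
  calc ∑' i, f (b + 1 + i)
      = ∑' i, ENNReal.ofReal (SYF q x (b + 1 + i) * SYC q x (b + 1 + i) N) := by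
        exact tsum_congr h2
    _ = ENNReal.ofReal (∑' i, SYF q x (b + 1 + i) * SYC q x (b + 1 + i) N) := by
        rw [ENNReal.ofReal_tsum_of_nonneg (fun i => mul_nonneg
          (SYF_nonneg hq0 hq1 hx (by omega)) (SYC_nonneg hq0 hq1 hx _ _)) hsum.summable]
    _ = ENNReal.ofReal (SYG q N * SYC q x b N) := by rw [hsum.tsum_eq]

lemma SY_key' (hq0 : 0 < q) (hq1 : q < 1) (hx : |x| < 1) {m : ℕ} (hm : 1 ≤ m) (N : ℕ) :
    (∑' n : ℕ, if N < n then ENNReal.ofReal (SYF q x n * SYC q x m n) else 0)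
      = ENNReal.ofReal (SYG q m * SYC q x m N) := by
  have h := SY_key hq0 hq1 hx hm N
  calc (∑' n : ℕ, if N < n then ENNReal.ofReal (SYF q x n * SYC q x m n) else 0)
      = (∑' n : ℕ, if N < n then ENNReal.ofReal (SYF q x n * SYC q x n m) else 0) := by
        apply tsum_congr; intro n; rw [SYC_symm]
    _ = ENNReal.ofReal (SYG q m * SYC q x N m) := h
    _ = ENNReal.ofReal (SYG q m * SYC q x m N) := by rw [SYC_symm]

end SY

def SYA (q x : ℝ) : List ℕ → ℕ → ℕ → ℝ≥0∞
  | [], b, N => ENNReal.ofReal (SYC q x b N)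
  | c :: k, b, N => ∑' m : ℕ, if b < m then ENNReal.ofReal (SYwt q x c m) * SYA q x k m N else 0

def SYB (q x : ℝ) (k : List ℕ) : List ℕ → ℕ → ℝ≥0∞
  | [], n => SYA q x k 0 n
  | c :: l, n => ∑' m : ℕ, if n < m then ENNReal.ofReal (SYwt q x c m) * SYB q x k l m else 0

section SY
variable {q x : ℝ}

lemma SYA_nil (b N : ℕ) : SYA q x [] b N = ENNReal.ofReal (SYC q x b N) := rfl
lemma SYA_cons (c : ℕ) (k : List ℕ) (b N : ℕ) :
    SYA q x (c :: k) b N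
      = ∑' m : ℕ, if b < m then ENNReal.ofReal (SYwt q x c m) * SYA q x k m N else 0 := rfl

lemma ite_tsum_push (P : Prop) [Decidable P] (a : ℝ≥0∞) (f : ℕ → ℝ≥0∞) :
    (if P then a * ∑' n, f n else 0) = ∑' n, if P then a * f n else 0 := by
  by_cases h : P
  · simp only [if_pos h, ← ENNReal.tsum_mul_left]
  · simp [if_neg h]

lemma SY_swap (b N : ℕ) (w F' : ℕ → ℝ≥0∞) (T : ℕ → ℕ → ℝ≥0∞) :
    (∑' m : ℕ, if b < m then w m * ∑' n : ℕ, (if N < n then F' n * T m n else 0) else 0)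
      = ∑' n : ℕ, if N < n then F' n * ∑' m : ℕ, (if b < m then w m * T m n else 0) else 0 := by
  calc (∑' m : ℕ, if b < m then w m * ∑' n : ℕ, (if N < n then F' n * T m n else 0) else 0)
      = ∑' m : ℕ, ∑' n : ℕ,
          (if b < m then (if N < n then w m * (F' n * T m n) else 0) else 0) := by
        refine tsum_congr fun m => ?_
        by_cases h : b < m
        · simp only [if_pos h, ← ENNReal.tsum_mul_left]
          exact tsum_congr fun n => by by_cases h2 : N < n <;> simp [h2]
        · simp [if_neg h]
    _ = ∑' n : ℕ, ∑' m : ℕ,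
          (if b < m then (if N < n then w m * (F' n * T m n) else 0) else 0) :=
        ENNReal.tsum_comm
    _ = _ := by
        refine tsum_congr fun n => ?_
        by_cases h2 : N < n
        · simp only [if_pos h2, ← ENNReal.tsum_mul_left]
          exact tsum_congr fun m => by
            by_cases h : b < m <;> simp [h, mul_comm, mul_assoc, mul_left_comm]
        · simp [if_neg h2]

lemma SYA_append_one (hq0 : 0 < q) (hq1 : q < 1) (hx : |x| < 1) (k : List ℕ) {N : ℕ}
    (hN : 1 ≤ N) : ∀ b, SYA q x (k ++ [1]) b N = ENNReal.ofReal (SYG q N) * SYA q x k b N := by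
  induction k with
  | nil =>
    intro b
    rw [List.nil_append, SYA_cons, SYA_nil]
    calc (∑' m : ℕ, if b < m then ENNReal.ofReal (SYwt q x 1 m) * SYA q x [] m N else 0)
        = ∑' m : ℕ, if b < m then ENNReal.ofReal (SYF q x m * SYC q x m N) else 0 := by
          refine tsum_congr fun m => ?_
          by_cases h : b < m
          · rw [if_pos h, SYA_nil, SYwt_one,
              ← ENNReal.ofReal_mul (SYF_nonneg hq0 hq1 hx (show 1 ≤ m by omega)), if_pos h]
          · simp [if_neg h]
      _ = ENNReal.ofReal (SYG q N * SYC q x b N) := SY_key hq0 hq1 hx hN b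
      _ = ENNReal.ofReal (SYG q N) * ENNReal.ofReal (SYC q x b N) :=
          ENNReal.ofReal_mul (SYG_nonneg hq0 hq1 N)
  | cons c k ih =>
    intro b
    rw [List.cons_append, SYA_cons, SYA_cons]
    calc (∑' m : ℕ, if b < m then ENNReal.ofReal (SYwt q x c m) * SYA q x (k ++ [1]) m N else 0)
        = ∑' m : ℕ, if b < m then
            ENNReal.ofReal (SYG q N) * (ENNReal.ofReal (SYwt q x c m) * SYA q x k m N) else 0 := by
          refine tsum_congr fun m => ?_
          by_cases h : b < m
          · simp only [if_pos h, ih m]; ring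
          · simp [if_neg h]
      _ = ENNReal.ofReal (SYG q N) *
            ∑' m : ℕ, (if b < m then ENNReal.ofReal (SYwt q x c m) * SYA q x k m N else 0) := by
          rw [← ENNReal.tsum_mul_left]
          exact tsum_congr fun m => by by_cases h : b < m <;> simp [h]

lemma SYA_append_succ (hq0 : 0 < q) (hq1 : q < 1) (hx : |x| < 1) (k : List ℕ) {c : ℕ}
    (hc : 1 ≤ c) (N : ℕ) : ∀ b, SYA q x (k ++ [c + 1]) b N
      = ∑' n : ℕ, if N < n then ENNReal.ofReal (SYF q x n) * SYA q x (k ++ [c]) b n else 0 := by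
  induction k with
  | nil =>
    intro b
    rw [List.nil_append, SYA_cons]
    have hstep : ∀ m : ℕ, b < m →
        ENNReal.ofReal (SYwt q x (c + 1) m) * SYA q x [] m N
          = ENNReal.ofReal (SYwt q x c m) *
              ∑' n : ℕ, (if N < n then ENNReal.ofReal (SYF q x n)
                * ENNReal.ofReal (SYC q x m n) else 0) := by
      intro m hm
      have hm1 : 1 ≤ m := by omega
      have e : (∑' n : ℕ, if N < n then
          ENNReal.ofReal (SYF q x n) * ENNReal.ofReal (SYC q x m n) else 0)
          = ENNReal.ofReal (SYG q m * SYC q x m N) := by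
        rw [← SY_key' hq0 hq1 hx hm1 N]
        refine tsum_congr fun n => ?_
        by_cases h2 : N < n
        · rw [if_pos h2, ← ENNReal.ofReal_mul (SYF_nonneg hq0 hq1 hx (show 1 ≤ n by omega)),
            if_pos h2]
        · simp [if_neg h2]
      rw [e, SYA_nil, ← ENNReal.ofReal_mul (SYwt_nonneg hq0 hq1 hx (c + 1) hm1),
        ← ENNReal.ofReal_mul (SYwt_nonneg hq0 hq1 hx c hm1)]
      congr 1
      rw [SYwt_succ hc]
      ring
    calc (∑' m : ℕ, if b < m then ENNReal.ofReal (SYwt q x (c + 1) m) * SYA q x [] m N else 0)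
        = ∑' m : ℕ, if b < m then ENNReal.ofReal (SYwt q x c m) *
            ∑' n : ℕ, (if N < n then ENNReal.ofReal (SYF q x n)
              * ENNReal.ofReal (SYC q x m n) else 0) else 0 := by
          refine tsum_congr fun m => ?_
          by_cases h : b < m
          · simp only [if_pos h, hstep m h]
          · simp [if_neg h]
      _ = ∑' n : ℕ, if N < n then ENNReal.ofReal (SYF q x n) *
            ∑' m : ℕ, (if b < m then ENNReal.ofReal (SYwt q x c m)
              * ENNReal.ofReal (SYC q x m n) else 0) else 0 :=
          SY_swap b N _ _ _
      _ = _ := by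
          refine tsum_congr fun n => ?_
          by_cases h2 : N < n
          · simp only [if_pos h2, List.nil_append, SYA_cons, SYA_nil]
          · simp [if_neg h2]
  | cons d k ih =>
    intro b
    rw [List.cons_append, SYA_cons]
    calc (∑' m : ℕ, if b < m then ENNReal.ofReal (SYwt q x d m) * SYA q x (k ++ [c + 1]) m N else 0)
        = ∑' m : ℕ, if b < m then ENNReal.ofReal (SYwt q x d m) *
            ∑' n : ℕ, (if N < n then ENNReal.ofReal (SYF q x n)
              * SYA q x (k ++ [c]) m n else 0) else 0 := by
          refine tsum_congr fun m => ?_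
          by_cases h : b < m
          · simp only [if_pos h, ih m]
          · simp [if_neg h]
      _ = ∑' n : ℕ, if N < n then ENNReal.ofReal (SYF q x n) *
            ∑' m : ℕ, (if b < m then ENNReal.ofReal (SYwt q x d m)
              * SYA q x (k ++ [c]) m n else 0) else 0 :=
          SY_swap b N _ _ _
      _ = _ := by
          refine tsum_congr fun n => ?_
          by_cases h2 : N < n
          · simp only [if_pos h2, List.cons_append, SYA_cons]
          · simp [if_neg h2]

lemma SYB_nil (k : List ℕ) (n : ℕ) : SYB q x k [] n = SYA q x k 0 n := rfl
lemma SYB_cons (k : List ℕ) (c : ℕ) (l : List ℕ) (n : ℕ) :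
    SYB q x k (c :: l) n
      = ∑' m : ℕ, if n < m then ENNReal.ofReal (SYwt q x c m) * SYB q x k l m else 0 := rfl

lemma SYB_T1 (hq0 : 0 < q) (hq1 : q < 1) (hx : |x| < 1) (k : List ℕ) {c : ℕ} (hc : 1 ≤ c)
    (l : List ℕ) : ∀ n, SYB q x (k ++ [c + 1]) l n = SYB q x (k ++ [c]) (l ++ [1]) n := by
  induction l with
  | nil =>
    intro n
    rw [SYB_nil, List.nil_append, SYA_append_succ hq0 hq1 hx k hc n 0, SYB_cons]
    refine tsum_congr fun m => ?_
    by_cases h : n < m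
    · rw [if_pos h, if_pos h, SYwt_one, SYB_nil]
    · rw [if_neg h, if_neg h]
  | cons d l ih =>
    intro n
    rw [List.cons_append, SYB_cons, SYB_cons]
    refine tsum_congr fun m => ?_
    by_cases h : n < m
    · rw [if_pos h, if_pos h, ih m]
    · rw [if_neg h, if_neg h]

lemma SYB_T2 (hq0 : 0 < q) (hq1 : q < 1) (hx : |x| < 1) (k : List ℕ) {c : ℕ} (hc : 1 ≤ c)
    (l : List ℕ) : ∀ n, SYB q x (k ++ [1]) (l ++ [c]) n = SYB q x k (l ++ [c + 1]) n := by
  induction l with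
  | nil =>
    intro n
    rw [List.nil_append, List.nil_append, SYB_cons, SYB_cons]
    refine tsum_congr fun m => ?_
    by_cases h : n < m
    · rw [if_pos h, if_pos h, SYB_nil, SYB_nil,
        SYA_append_one hq0 hq1 hx k (show 1 ≤ m by omega) 0,
        ← mul_assoc, ← ENNReal.ofReal_mul (SYwt_nonneg hq0 hq1 hx c (show 1 ≤ m by omega)),
        ← SYwt_succ hc]
    · rw [if_neg h, if_neg h]
  | cons d l ih =>
    intro n
    rw [List.cons_append, List.cons_append, SYB_cons, SYB_cons]
    refine tsum_congr fun m => ?_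
    by_cases h : n < m
    · rw [if_pos h, if_pos h, ih m]
    · rw [if_neg h, if_neg h]

end SY

def SYPhi (q x : ℝ) (k l : List ℕ) : ℝ≥0∞ := SYB q x k l 0

section SY
variable {q x : ℝ}

lemma phi_rep1 (hq0 : 0 < q) (hq1 : q < 1) (hx : |x| < 1) (k' : List ℕ) :
    ∀ j, 1 ≤ j → ∀ l, SYPhi q x (k' ++ [j + 1]) l
      = SYPhi q x (k' ++ [1]) (l ++ List.replicate j 1) := by
  intro j hj
  induction j, hj using Nat.le_induction with
  | base =>
    intro l
    have h := SYB_T1 hq0 hq1 hx k' (le_refl 1) l 0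
    simpa [SYPhi] using h
  | succ j hj ih =>
    intro l
    have h := SYB_T1 hq0 hq1 hx k' (show 1 ≤ j + 1 by omega) l 0
    show SYB q x (k' ++ [j + 1 + 1]) l 0 = _
    rw [h]
    have h2 := ih (l ++ [1])
    rw [show (l ++ [1]) ++ List.replicate j 1 = l ++ List.replicate (j + 1) 1 by
      rw [List.append_assoc]; rfl] at h2
    exact h2

lemma phi_rep2 (hq0 : 0 < q) (hq1 : q < 1) (hx : |x| < 1) (k : List ℕ) :
    ∀ i, ∀ c, 1 ≤ c → ∀ l', SYPhi q x (k ++ List.replicate i 1) (l' ++ [c])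
      = SYPhi q x k (l' ++ [c + i]) := by
  intro i
  induction i with
  | zero => intro c hc l'; simp
  | succ i ih =>
    intro c hc l'
    have e : k ++ List.replicate (i + 1) 1 = (k ++ List.replicate i 1) ++ [1] := by
      rw [List.append_assoc, List.replicate_succ' (n := i)]
    rw [e]
    have h := SYB_T2 hq0 hq1 hx (k ++ List.replicate i 1) hc l' 0
    show SYB q x _ _ 0 = _
    rw [h]
    have h2 := ih (c + 1) (by omega) l'
    rw [show c + 1 + i = c + (i + 1) by omega] at h2
    exact h2

lemma phi_block (hq0 : 0 < q) (hq1 : q < 1) (hx : |x| < 1) (k l : List ℕ) {a b : ℕ}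
    (ha : 1 ≤ a) (hb : 1 ≤ b) :
    SYPhi q x (k ++ (List.replicate (a - 1) 1 ++ [b + 1])) l
      = SYPhi q x k (l ++ (List.replicate (b - 1) 1 ++ [a + 1])) := by
  rw [← List.append_assoc]
  rw [phi_rep1 hq0 hq1 hx (k ++ List.replicate (a - 1) 1) b hb l]
  have e2 : (k ++ List.replicate (a - 1) 1) ++ [1] = k ++ List.replicate a 1 := by
    rw [List.append_assoc]
    congr 1
    conv_rhs => rw [show a = (a - 1) + 1 by omega, List.replicate_succ']
  have e3 : l ++ List.replicate b 1 = (l ++ List.replicate (b - 1) 1) ++ [1] := by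
    rw [List.append_assoc]
    congr 1
    conv_lhs => rw [show b = (b - 1) + 1 by omega, List.replicate_succ']
  rw [e2, e3, phi_rep2 hq0 hq1 hx k a 1 (le_refl 1) (l ++ List.replicate (b - 1) 1),
    List.append_assoc, show 1 + a = a + 1 by omega]

end SY


section SY
variable {q x : ℝ}

def SYT (b r : ℕ) : Type := {m : Fin r → ℕ // StrictMono m ∧ ∀ i, b < m i}

def SYZ (q x : ℝ) (k : List ℕ) (b : ℕ) : ℝ≥0∞ :=
  ∑' m : SYT b k.length, ENNReal.ofReal (∏ i, SYwt q x (k.get i) (m.1 i))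

lemma SYZ_nil (b : ℕ) : SYZ q x [] b = 1 := by
  haveI : Unique (SYT b (List.length ([] : List ℕ))) :=
    { default := ⟨fun i => i.elim0, fun i => i.elim0, fun i => i.elim0⟩
      uniq := fun t => Subtype.ext (funext fun i => i.elim0) }
  rw [SYZ, tsum_eq_single default (fun t ht => absurd (Unique.uniq _ t) ht)]
  simp

def peelEquiv (b r : ℕ) : SYT b (r + 1) ≃ Σ m₀ : {m₀ : ℕ // b < m₀}, SYT m₀.1 r where
  toFun t := ⟨⟨t.1 0, t.2.2 0⟩, ⟨fun i => t.1 i.succ,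
    fun i j h => t.2.1 (Fin.succ_lt_succ_iff.mpr h), fun i => t.2.1 (Fin.succ_pos i)⟩⟩
  invFun p := ⟨Fin.cons p.1.1 p.2.1, by
      intro u v huv
      rcases Fin.eq_zero_or_eq_succ v with rfl | ⟨vj, rfl⟩
      · exact absurd huv (Fin.not_lt_zero u)
      rcases Fin.eq_zero_or_eq_succ u with rfl | ⟨uj, rfl⟩
      · simpa [Fin.cons_succ, Fin.cons_zero] using p.2.2.2 vj
      · simpa [Fin.cons_succ] using p.2.2.1 (Fin.succ_lt_succ_iff.mp huv),
    by
      intro i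
      rcases Fin.eq_zero_or_eq_succ i with rfl | ⟨j, rfl⟩
      · simpa [Fin.cons_zero] using p.1.2
      · simp only [Fin.cons_succ]
        exact lt_trans p.1.2 (p.2.2.2 j)⟩
  left_inv t := Subtype.ext (funext fun i => by
    rcases Fin.eq_zero_or_eq_succ i with rfl | ⟨j, rfl⟩
    · simp [Fin.cons_zero]
    · simp [Fin.cons_succ])
  right_inv p := by
    rcases p with ⟨⟨a, ha⟩, ⟨f, hf1, hf2⟩⟩
    rfl

lemma SYZ_cons (hq0 : 0 < q) (hq1 : q < 1) (hx : |x| < 1) (c : ℕ) (k : List ℕ) (b : ℕ) :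
    SYZ q x (c :: k) b
      = ∑' m : ℕ, if b < m then ENNReal.ofReal (SYwt q x c m) * SYZ q x k m else 0 := by
  rw [SYZ]
  have e : (∑' m : SYT b (c :: k).length,
        ENNReal.ofReal (∏ i, SYwt q x ((c :: k).get i) (m.1 i)))
      = ∑' (p : Σ m₀ : {m₀ : ℕ // b < m₀}, SYT m₀.1 k.length),
          ENNReal.ofReal (∏ i, SYwt q x ((c :: k).get i)
            (((peelEquiv b k.length).symm p).1 i)) :=
    ((peelEquiv b k.length).symm.tsum_eq
      (f := fun t : SYT b (k.length + 1) =>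
        ENNReal.ofReal (∏ i, SYwt q x ((c :: k).get i) (t.1 i)))).symm
  rw [e, ENNReal.tsum_sigma']
  have hfiber : ∀ (m₀ : {m₀ : ℕ // b < m₀}),
      (∑' t : SYT m₀.1 k.length, ENNReal.ofReal
        (∏ i, SYwt q x ((c :: k).get i) (((peelEquiv b k.length).symm ⟨m₀, t⟩).1 i)))
      = ENNReal.ofReal (SYwt q x c m₀.1) * SYZ q x k m₀.1 := by
    intro m₀
    rw [SYZ, ← ENNReal.tsum_mul_left]
    refine tsum_congr fun t => ?_
    have hsymm : ((peelEquiv b k.length).symm ⟨m₀, t⟩).1 = Fin.cons m₀.1 t.1 := rfl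
    have hprod : (∏ i, SYwt q x ((c :: k).get i) (((peelEquiv b k.length).symm ⟨m₀, t⟩).1 i))
        = SYwt q x c m₀.1 * ∏ i, SYwt q x (k.get i) (t.1 i) := by
      rw [hsymm]
      exact (Fin.prod_univ_succ _).trans rfl
    rw [hprod, ENNReal.ofReal_mul]
    exact SYwt_nonneg hq0 hq1 hx c ((Nat.zero_le b).trans_lt m₀.2)
  calc (∑' (m₀ : {m₀ : ℕ // b < m₀}), ∑' t : SYT m₀.1 k.length, ENNReal.ofReal
        (∏ i, SYwt q x ((c :: k).get i) (((peelEquiv b k.length).symm ⟨m₀, t⟩).1 i)))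
      = ∑' (m₀ : {m₀ : ℕ // b < m₀}), ENNReal.ofReal (SYwt q x c m₀.1) * SYZ q x k m₀.1 :=
        tsum_congr hfiber
    _ = ∑' m : ℕ, Set.indicator {m : ℕ | b < m}
          (fun m => ENNReal.ofReal (SYwt q x c m) * SYZ q x k m) m :=
        tsum_subtype {m : ℕ | b < m} (fun m => ENNReal.ofReal (SYwt q x c m) * SYZ q x k m)
    _ = ∑' m : ℕ, if b < m then ENNReal.ofReal (SYwt q x c m) * SYZ q x k m else 0 :=
        tsum_congr fun m => by simp [Set.indicator_apply, Set.mem_setOf_eq]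

lemma SYZ_eq_SYA (hq0 : 0 < q) (hq1 : q < 1) (hx : |x| < 1) :
    ∀ (k : List ℕ) (b : ℕ), SYZ q x k b = SYA q x k b 0 := by
  intro k
  induction k with
  | nil =>
    intro b
    rw [SYZ_nil, SYA_nil, SYC_zero_right hq0 hq1 hx, ENNReal.ofReal_one]
  | cons c k ih =>
    intro b
    rw [SYZ_cons hq0 hq1 hx, SYA_cons]
    refine tsum_congr fun m => ?_
    by_cases h : b < m
    · rw [if_pos h, if_pos h, ih m]
    · rw [if_neg h, if_neg h]

lemma SYB_nil_left (hq0 : 0 < q) (hq1 : q < 1) (hx : |x| < 1) :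
    ∀ (l : List ℕ) (n : ℕ), SYB q x [] l n = SYZ q x l n := by
  intro l
  induction l with
  | nil =>
    intro n
    rw [SYB_nil, SYA_nil, SYC_zero_left hq0 hq1 hx, ENNReal.ofReal_one, SYZ_nil]
  | cons c l ih =>
    intro n
    rw [SYB_cons, SYZ_cons hq0 hq1 hx]
    refine tsum_congr fun m => ?_
    by_cases h : n < m
    · rw [if_pos h, if_pos h, ih m]
    · rw [if_neg h, if_neg h]

end SY

section SY
variable {q x : ℝ}

lemma SY_main (hq0 : 0 < q) (hq1 : q < 1) (hx : |x| < 1) :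
    ∀ ab : List (ℕ × ℕ), (∀ p ∈ ab, 0 < p.1 ∧ 0 < p.2) → ∀ k l,
      SYPhi q x (k ++ indexFromAB ab) l = SYPhi q x k (l ++ dualFromAB ab) := by
  intro ab
  induction ab using List.reverseRecOn with
  | nil => intro _ k l; simp [indexFromAB, dualFromAB]
  | append_singleton ab₀ p ih =>
    intro hpos k l
    obtain ⟨hp1, hp2⟩ := hpos p (by simp)
    have hpos₀ : ∀ p' ∈ ab₀, 0 < p'.1 ∧ 0 < p'.2 := fun p' hp' => hpos p' (by simp [hp'])
    have e1 : indexFromAB (ab₀ ++ [p])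
        = indexFromAB ab₀ ++ (List.replicate (p.1 - 1) 1 ++ [p.2 + 1]) := by
      simp [indexFromAB]
    have e2 : dualFromAB (ab₀ ++ [p])
        = (List.replicate (p.2 - 1) 1 ++ [p.1 + 1]) ++ dualFromAB ab₀ := by
      simp [dualFromAB]
    calc SYPhi q x (k ++ indexFromAB (ab₀ ++ [p])) l
        = SYPhi q x ((k ++ indexFromAB ab₀)
            ++ (List.replicate (p.1 - 1) 1 ++ [p.2 + 1])) l := by
          rw [e1, List.append_assoc]
      _ = SYPhi q x (k ++ indexFromAB ab₀)
            (l ++ (List.replicate (p.2 - 1) 1 ++ [p.1 + 1])) :=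
          phi_block hq0 hq1 hx _ _ hp1 hp2
      _ = SYPhi q x k ((l ++ (List.replicate (p.2 - 1) 1 ++ [p.1 + 1])) ++ dualFromAB ab₀) :=
          ih hpos₀ k _
      _ = SYPhi q x k (l ++ dualFromAB (ab₀ ++ [p])) := by
        rw [e2, List.append_assoc]

end SY

/-- **Duality of the generating series.**  For `0 < q < 1`, `|x| < 1` and an admissible
index `k` with dual `k†`, one has `Z_q(k; x) = Z_q(k†; x)`. -/
theorem Zq1_duality (q x : ℝ) (hq0 : 0 < q) (hq1 : q < 1) (hx : |x| < 1)
    (ab : List (ℕ × ℕ)) (hab : ab ≠ []) (hpos : ∀ p ∈ ab, 0 < p.1 ∧ 0 < p.2) :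
    Zq1 q x (indexFromAB ab) = Zq1 q x (dualFromAB ab) := by
  have hZ1 : Zq1 q x (indexFromAB ab) = SYPhi q x (indexFromAB ab) [] := by
    show Zq1 q x (indexFromAB ab) = SYB q x (indexFromAB ab) [] 0
    rw [SYB_nil]
    have h1 : Zq1 q x (indexFromAB ab) = SYZ q x (indexFromAB ab) 0 := rfl
    rw [h1, SYZ_eq_SYA hq0 hq1 hx]
  have hZ2 : SYPhi q x [] (dualFromAB ab) = Zq1 q x (dualFromAB ab) := by
    show SYB q x [] (dualFromAB ab) 0 = _
    rw [SYB_nil_left hq0 hq1 hx]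
    rfl
  have h3 := SY_main hq0 hq1 hx ab hpos [] []
  rw [List.nil_append, List.nil_append] at h3
  rw [hZ1, h3, hZ2]

end
end

section
/- Classical telescoping identity: let n be a positive integer and m a non-negative integer. Then Σ_{a = m+1}^{∞} (1/a) · (a! · n!)/((a + n)!) = (1/n) · (m! · n!)/((m + n)!). -/
open scoped ENNReal

noncomputable section

/-- **Classical telescoping identity.**
`∑_{a>m} (1/a) · a!·n!/(a+n)! = (1/n) · m!·n!/(m+n)!`. -/
theorem classical_telescoping (n : ℕ) (hn : 0 < n) (m : ℕ) :
    HasSum (fun j : ℕ =>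
      (1 / (m + 1 + j : ℝ)) *
        ((Nat.factorial (m + 1 + j) : ℝ) * Nat.factorial n / Nat.factorial (m + 1 + j + n)))
      ((1 / (n : ℝ)) * ((Nat.factorial m : ℝ) * Nat.factorial n / Nat.factorial (m + n))) := by
  set g : ℕ → ℝ := fun j =>
    (1 / (n : ℝ)) * ((Nat.factorial (m + j) : ℝ) * Nat.factorial n / Nat.factorial (m + j + n))
    with hg
  have hfg : ∀ j : ℕ, (1 / (m + 1 + j : ℝ)) *
      ((Nat.factorial (m + 1 + j) : ℝ) * Nat.factorial n / Nat.factorial (m + 1 + j + n))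
      = g j - g (j + 1) := by
    intro j
    have h1 : m + 1 + j = (m + j) + 1 := by ring
    have h2 : m + (j + 1) = (m + j) + 1 := by ring
    have h3 : (m + j) + 1 + n = ((m + j) + n) + 1 := by ring
    simp only [hg, h1, h2, h3, Nat.factorial_succ]
    push_cast
    have p1 : (0:ℝ) < Nat.factorial (m + j) := by positivity
    have p2 : (0:ℝ) < Nat.factorial (m + j + n) := by positivity
    have p3 : (0:ℝ) < (m + j : ℝ) + 1 := by positivity
    have p4 : (0:ℝ) < (m + j + n : ℝ) + 1 := by positivity
    have p5 : (0:ℝ) < (n : ℝ) := by exact_mod_cast hn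
    field_simp
    ring
  have hnonneg : ∀ j : ℕ, 0 ≤ (1 / (m + 1 + j : ℝ)) *
      ((Nat.factorial (m + 1 + j) : ℝ) * Nat.factorial n / Nat.factorial (m + 1 + j + n)) := by
    intro j; positivity
  rw [hasSum_iff_tendsto_nat_of_nonneg hnonneg]
  have hsum : ∀ N : ℕ, ∑ j ∈ Finset.range N, (1 / (m + 1 + j : ℝ)) *
      ((Nat.factorial (m + 1 + j) : ℝ) * Nat.factorial n / Nat.factorial (m + 1 + j + n))
      = g 0 - g N := by
    intro N
    rw [← Finset.sum_range_sub' g N]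
    exact Finset.sum_congr rfl fun j _ => hfg j
  simp only [hsum]
  have hg0 : g 0 = (1 / (n : ℝ)) * ((Nat.factorial m : ℝ) * Nat.factorial n / Nat.factorial (m + n)) := by
    simp [hg]
  rw [← hg0]
  have hlim : Filter.Tendsto g Filter.atTop (nhds 0) := by
    have hb : ∀ N : ℕ, g N ≤ (Nat.factorial n : ℝ) / (m + N + 1) := by
      intro N
      have hle : (Nat.factorial (m + N) : ℝ) * (m + N + 1) ≤ Nat.factorial (m + N + n) := by
        have : Nat.factorial (m + N) * (m + N + 1) ≤ Nat.factorial (m + N + n) := by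
          calc Nat.factorial (m + N) * (m + N + 1) = Nat.factorial (m + N + 1) := by
                rw [Nat.factorial_succ]; ring
            _ ≤ Nat.factorial (m + N + n) := Nat.factorial_le (by omega)
        exact_mod_cast this
      have p2 : (0:ℝ) < Nat.factorial (m + N + n) := by positivity
      have p4 : (0:ℝ) < (m + N : ℝ) + 1 := by positivity
      have p5 : (0:ℝ) < (n : ℝ) := by exact_mod_cast hn
      have hn1 : (1 : ℝ) / n ≤ 1 := by
        rw [div_le_one p5]; exact_mod_cast hn
      have key : (Nat.factorial (m + N) : ℝ) * Nat.factorial n / Nat.factorial (m + N + n)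
          ≤ (Nat.factorial n : ℝ) / (m + N + 1) := by
        rw [div_le_div_iff₀ p2 (by push_cast; linarith)]
        have := hle
        push_cast at this ⊢
        nlinarith [Nat.factorial_pos n, (by positivity : (0:ℝ) ≤ (Nat.factorial n : ℝ))]
      calc g N ≤ 1 * ((Nat.factorial (m + N) : ℝ) * Nat.factorial n / Nat.factorial (m + N + n)) := by
            apply mul_le_mul_of_nonneg_right hn1 (by positivity)
        _ = _ := by rw [one_mul]
        _ ≤ _ := key
    have hb0 : ∀ N : ℕ, 0 ≤ g N := by intro N; simp only [hg]; positivity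
    apply squeeze_zero hb0 hb
    have : Filter.Tendsto (fun N : ℕ => (m + N + 1 : ℝ)) Filter.atTop Filter.atTop := by
      apply Filter.tendsto_atTop_add_const_right
      apply Filter.tendsto_atTop_add_const_left
      exact tendsto_natCast_atTop_atTop
    exact Filter.Tendsto.div_atTop tendsto_const_nhds this
  have := (tendsto_const_nhds (x := g 0) (f := Filter.atTop (α := ℕ))).sub hlim
  simpa using this


end
end
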